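/- arXiv:1703.01126 — 8 statements merged into one kernel-verified Lean document; each statement's English description precedes it below -/
import Mathlib

section
/- Let n ≥ 2, let x_1 < x_2 < … < x_n be real numbers, let Q(x) = ∏_{k=1}^n (x - x_k), let Q_k(x) = ∏_{j≠k} (x - x_j)/(x_k - x_j) be the Lagrange interpolation polynomials at these nodes, and let P be a real polynomial of degree at most 2n-2. Then the polynomial identity P(x) = ∑_{k=1}^n P(x_k)·Q_k(x)² holds if and only if Q'(x_k)·P'(x_k) = Q''(x_k)·P(x_k) for every k = 1, …, n (equivalently, if and only if Q divides the polynomial Q'P' - Q''P). -/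
open Polynomial Finset

/-- For distinct real nodes `x 1 < … < x n` with nodal polynomial `Q` and Lagrange basis
polynomials `Qk`, a real polynomial `P` of degree at most `2n-2` satisfies the identity
`P = ∑ P(x k) · (Qk k)²` if and only if `Q'(x k)·P'(x k) = Q''(x k)·P(x k)` for all `k`;
equivalently, if and only if `Q` divides `Q'·P' - Q''·P`. -/
theorem sum_of_squares_representation_iff
    (n : ℕ) (hn : 2 ≤ n) (x : Fin n → ℝ) (hx : StrictMono x)
    (Q : Polynomial ℝ) (hQ : Q = ∏ k, (X - C (x k)))
    (Qk : Fin n → Polynomial ℝ)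
    (hQk : ∀ k, Qk k = ∏ j ∈ Finset.univ.erase k, C ((x k - x j)⁻¹) * (X - C (x j)))
    (P : Polynomial ℝ) (hP : P.natDegree ≤ 2 * n - 2) :
    ((P = ∑ k, C (P.eval (x k)) * (Qk k) ^ 2) ↔
      (∀ k, (derivative Q).eval (x k) * (derivative P).eval (x k)
          = (derivative (derivative Q)).eval (x k) * P.eval (x k)))
    ∧
    ((P = ∑ k, C (P.eval (x k)) * (Qk k) ^ 2) ↔
      Q ∣ (derivative Q * derivative P - derivative (derivative Q) * P)) := by
  have hxinj : Function.Injective x := hx.injective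
  set S : Polynomial ℝ := ∑ k, C (P.eval (x k)) * (Qk k) ^ 2 with hS
  -- nonzero differences
  have hsub : ∀ {k j : Fin n}, j ≠ k → x k - x j ≠ 0 := by
    intro k j hjk
    exact sub_ne_zero.mpr fun h => hjk (hxinj h.symm)
  -- evaluation of Lagrange basis
  have hQkk : ∀ k, (Qk k).eval (x k) = 1 := by
    intro k
    rw [hQk, eval_prod]
    apply Finset.prod_eq_one
    intro j hj
    have h := hsub (Finset.mem_erase.mp hj).1
    simp [inv_mul_cancel₀ h]
  have hQkj : ∀ k j, j ≠ k → (Qk k).eval (x j) = 0 := by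
    intro k j hjk
    rw [hQk, eval_prod]
    apply Finset.prod_eq_zero (Finset.mem_erase.mpr ⟨hjk, mem_univ j⟩)
    simp
  -- the constants
  set c : Fin n → ℝ := fun m => ∏ j ∈ univ.erase m, (x m - x j) with hc
  have hc0 : ∀ m, c m ≠ 0 := by
    intro m
    exact Finset.prod_ne_zero_iff.mpr fun j hj => hsub (Finset.mem_erase.mp hj).1
  -- factorization Q = (X - x m) * (C (c m) * Qk m)
  have hfac : ∀ m, Q = (X - C (x m)) * (C (c m) * Qk m) := by
    intro m
    have h1 : C (c m) * Qk m = ∏ j ∈ univ.erase m, (X - C (x j)) := by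
      rw [hQk, hc, map_prod, ← Finset.prod_mul_distrib]
      apply Finset.prod_congr rfl
      intro j hj
      rw [← mul_assoc, ← C_mul, mul_inv_cancel₀ (hsub (Finset.mem_erase.mp hj).1), C_1, one_mul]
    rw [h1, hQ, ← Finset.mul_prod_erase univ (fun k => X - C (x k)) (mem_univ m)]
  -- derivative evaluations of Q
  have hQ' : ∀ m, (derivative Q).eval (x m) = c m := by
    intro m
    rw [hfac m]
    simp [derivative_mul, hQkk m]
  have hQ'' : ∀ m, (derivative (derivative Q)).eval (x m)
      = 2 * c m * (derivative (Qk m)).eval (x m) := by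
    intro m
    rw [hfac m]
    simp [derivative_mul, hQkk m]
    ring
  -- evaluation of S and its derivative
  have hSeval : ∀ m, S.eval (x m) = P.eval (x m) := by
    intro m
    rw [hS, eval_finset_sum]
    rw [Finset.sum_eq_single m]
    · simp [hQkk m]
    · intro k _ hkm
      simp [hQkj k m (Ne.symm hkm)]
    · simp
  have hS' : ∀ m, (derivative S).eval (x m)
      = 2 * P.eval (x m) * (derivative (Qk m)).eval (x m) := by
    intro m
    rw [hS, derivative_sum, eval_finset_sum]
    rw [Finset.sum_eq_single m]
    · simp [derivative_mul, derivative_pow, hQkk m]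
      ring
    · intro k _ hkm
      simp [derivative_mul, derivative_pow, hQkj k m (Ne.symm hkm)]
    · simp
  -- divisibility criterion
  have hQ0 : ∀ m, Q.eval (x m) = 0 := by
    intro m
    rw [hQ, eval_prod]
    exact Finset.prod_eq_zero (mem_univ m) (by simp)
  have Ldvd : ∀ F : Polynomial ℝ, (∀ k, F.eval (x k) = 0) → Q ∣ F := by
    intro F hF
    rw [hQ]
    exact Fintype.prod_dvd_of_coprime (pairwise_coprime_X_sub_C hxinj)
      fun k => dvd_iff_isRoot.mpr (hF k)
  -- degree facts
  have hQdeg : Q.natDegree = n := by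
    rw [hQ, natDegree_prod _ _ fun k _ => X_sub_C_ne_zero (x k)]
    simp
  have hQkdeg : ∀ k, (Qk k).natDegree ≤ n - 1 := by
    intro k
    rw [hQk]
    refine (natDegree_prod_le _ _).trans ?_
    have : ∀ j ∈ univ.erase k, (C ((x k - x j)⁻¹) * (X - C (x j))).natDegree ≤ 1 := by
      intro j hj
      refine (natDegree_mul_le).trans ?_
      simp
    refine (Finset.sum_le_sum this).trans ?_
    simp [Finset.card_erase_of_mem (mem_univ k)]
  have hSdeg : S.natDegree ≤ 2 * n - 2 := by
    rw [hS]
    refine (natDegree_sum_le _ _).trans ?_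
    rw [Finset.fold_max_le]
    constructor
    · omega
    · intro k _
      refine (natDegree_mul_le).trans ?_
      simp only [natDegree_C, zero_add]
      refine (natDegree_pow _ _).le.trans ?_
      have := hQkdeg k
      omega
  -- main equivalence
  have main : (P = S) ↔
      (∀ k, (derivative Q).eval (x k) * (derivative P).eval (x k)
          = (derivative (derivative Q)).eval (x k) * P.eval (x k)) := by
    constructor
    · intro h m
      have hPd : (derivative P).eval (x m)
          = 2 * P.eval (x m) * (derivative (Qk m)).eval (x m) := by
        conv_lhs => rw [h]
        exact hS' m
      rw [hQ' m, hQ'' m, hPd]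
      ring
    · intro h
      set D : Polynomial ℝ := P - S with hD
      have hD0 : ∀ m, D.eval (x m) = 0 := by
        intro m
        simp [hD, hSeval m]
      obtain ⟨R, hR⟩ := Ldvd D hD0
      have hQne : Q ≠ 0 := by
        rw [hQ]
        exact Finset.prod_ne_zero_iff.mpr fun k _ => X_sub_C_ne_zero (x k)
      have hD' : ∀ m, (derivative D).eval (x m) = 0 := by
        intro m
        have h1 : c m * (derivative P).eval (x m) = c m * (2 * P.eval (x m) *
            (derivative (Qk m)).eval (x m)) := by
          have := h m
          rw [hQ' m, hQ'' m] at this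
          linarith [this]
        have h2 := mul_left_cancel₀ (hc0 m) h1
        simp [hD, hS' m, h2]
      have hR0 : ∀ m, R.eval (x m) = 0 := by
        intro m
        have h3 := hD' m
        rw [hR] at h3
        simp only [derivative_mul, eval_add, eval_mul, hQ0 m, zero_mul, add_zero,
          hQ' m] at h3
        rcases mul_eq_zero.mp h3 with h | h
        · exact absurd h (hc0 m)
        · exact h
      have hQdvdR := Ldvd R hR0
      by_cases hRz : R = 0
      · have : D = 0 := by rw [hR, hRz, mul_zero]
        rw [hD] at this
        exact sub_eq_zero.mp this
      · exfalso
        have hDdeg : D.natDegree ≤ 2 * n - 2 := by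
          refine (natDegree_sub_le _ _).trans ?_
          exact max_le hP hSdeg
        have hDne : D ≠ 0 := by
          intro hz
          rw [hz] at hR
          exact hRz (by
            rcases mul_eq_zero.mp hR.symm with h | h
            · exact absurd h hQne
            · exact h)
        have hmul : D.natDegree = Q.natDegree + R.natDegree := by
          rw [hR, natDegree_mul hQne hRz]
        have : R.natDegree < Q.natDegree := by omega
        exact hRz (eq_zero_of_dvd_of_natDegree_lt hQdvdR this)
  refine ⟨main, main.trans ?_⟩
  constructor
  · intro h
    apply Ldvd
    intro k
    simp [h k]
  · intro ⟨G, hG⟩ k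
    have : (derivative Q * derivative P - derivative (derivative Q) * P).eval (x k) = 0 := by
      rw [hG]
      simp [hQ0 k]
    simp at this
    linarith [this]
end

section
/- Let n ≥ 2, let t_1 < t_2 < … < t_{n-1} be real numbers, let S(x) = ∏_{k=1}^{n-1} (x - t_k), let S_k(x) = ∏_{j≠k} (x - t_j)/(t_k - t_j) be the Lagrange interpolation polynomials at these nodes, and let P be a monic real polynomial of degree 2n-2. Then the polynomial identity P(x) = S(x)² + ∑_{k=1}^{n-1} P(t_k)·S_k(x)² holds if and only if P'(t_k)·S'(t_k) = P(t_k)·S''(t_k) for every k = 1, …, n-1 (equivalently, if and only if S divides the polynomial P'S' - PS''). -/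
open Polynomial Finset

/-- For distinct real nodes `t 1 < … < t (n-1)` with nodal polynomial `S` and Lagrange
basis polynomials `Sk`, a monic real polynomial `P` of degree `2n-2` satisfies the
identity `P = S² + ∑ P(t k) · (Sk k)²` if and only if
`P'(t k)·S'(t k) = P(t k)·S''(t k)` for all `k`; equivalently, if and only if `S`
divides `P'·S' - P·S''`. -/
theorem sum_of_squares_representation_iff'
    (n : ℕ) (hn : 2 ≤ n) (t : Fin (n - 1) → ℝ) (ht : StrictMono t)
    (S : Polynomial ℝ) (hS : S = ∏ k, (X - C (t k)))
    (Sk : Fin (n - 1) → Polynomial ℝ)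
    (hSk : ∀ k, Sk k = ∏ j ∈ Finset.univ.erase k, C ((t k - t j)⁻¹) * (X - C (t j)))
    (P : Polynomial ℝ) (hPmonic : P.Monic) (hPdeg : P.natDegree = 2 * n - 2) :
    ((P = S ^ 2 + ∑ k, C (P.eval (t k)) * (Sk k) ^ 2) ↔
      (∀ k, (derivative P).eval (t k) * (derivative S).eval (t k)
          = P.eval (t k) * (derivative (derivative S)).eval (t k)))
    ∧
    ((P = S ^ 2 + ∑ k, C (P.eval (t k)) * (Sk k) ^ 2) ↔
      S ∣ (derivative P * derivative S - P * derivative (derivative S))) := by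
  have inj : Function.Injective t := ht.injective
  have hm1 : 1 ≤ n - 1 := by omega
  -- auxiliary polynomials and weights
  set N : Fin (n - 1) → ℝ[X] := fun k => ∏ j ∈ Finset.univ.erase k, (X - C (t j)) with hN
  set w : Fin (n - 1) → ℝ := fun k => ∏ j ∈ Finset.univ.erase k, (t k - t j)⁻¹ with hw
  have hsub_ne : ∀ (k j : Fin (n - 1)), j ≠ k → t k - t j ≠ 0 := by
    intro k j hjk
    exact sub_ne_zero.mpr fun h => hjk (inj h.symm)
  have hNk : ∀ k, (N k).eval (t k) = ∏ j ∈ Finset.univ.erase k, (t k - t j) := by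
    intro k; simp [hN, eval_prod]
  have hNk0 : ∀ k, (N k).eval (t k) ≠ 0 := by
    intro k
    rw [hNk k]
    exact Finset.prod_ne_zero_iff.mpr fun j hj => hsub_ne k j (Finset.ne_of_mem_erase hj)
  have hwN : ∀ k, w k * (N k).eval (t k) = 1 := by
    intro k
    rw [hNk k, hw]
    rw [← Finset.prod_mul_distrib]
    exact Finset.prod_eq_one fun j hj =>
      inv_mul_cancel₀ (hsub_ne k j (Finset.ne_of_mem_erase hj))
  have hwval : ∀ k, w k = ((N k).eval (t k))⁻¹ := by
    intro k
    exact eq_inv_of_mul_eq_one_left (hwN k)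
  have hSfac : ∀ k, S = (X - C (t k)) * N k := by
    intro k
    rw [hS]
    exact (Finset.mul_prod_erase _ _ (Finset.mem_univ k)).symm
  have hSkfac : ∀ k, Sk k = C (w k) * N k := by
    intro k
    rw [hSk k, Finset.prod_mul_distrib]
    congr 1
    rw [hw]
    exact (map_prod (C : ℝ →+* ℝ[X]) (fun j => (t k - t j)⁻¹) (Finset.univ.erase k)).symm
  have hSroot : ∀ k, S.eval (t k) = 0 := by
    intro k; rw [hSfac k]; simp
  have hS'val : ∀ k, (derivative S).eval (t k) = (N k).eval (t k) := by
    intro k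
    rw [hSfac k]
    simp [derivative_mul]
  have hS''val : ∀ k,
      (derivative (derivative S)).eval (t k) = 2 * (derivative (N k)).eval (t k) := by
    intro k
    rw [hSfac k]
    simp [derivative_mul]
    ring
  have hSk_self : ∀ k, (Sk k).eval (t k) = 1 := by
    intro k
    rw [hSkfac k, eval_mul, eval_C, hwN k]
  have hSk_ne : ∀ k j, j ≠ k → (Sk k).eval (t j) = 0 := by
    intro k j hjk
    rw [hSk k, eval_prod]
    refine Finset.prod_eq_zero (Finset.mem_erase.mpr ⟨hjk, Finset.mem_univ j⟩) ?_
    simp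
  have hSk' : ∀ k, (derivative (Sk k)).eval (t k) = w k * (derivative (N k)).eval (t k) := by
    intro k
    rw [hSkfac k, derivative_C_mul, eval_mul, eval_C]
  -- divisibility criterion
  have hdvd : ∀ F : ℝ[X], (∀ k, F.eval (t k) = 0) → S ∣ F := by
    intro F hF
    rw [hS]
    exact Fintype.prod_dvd_of_coprime (pairwise_coprime_X_sub_C inj)
      fun k => dvd_iff_isRoot.mpr (hF k)
  -- degrees
  have hSmonic : S.Monic := by
    rw [hS]; exact monic_prod_of_monic _ _ fun k _ => monic_X_sub_C _
  have hSdeg : S.natDegree = n - 1 := by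
    rw [hS, natDegree_prod _ _ fun k _ => X_sub_C_ne_zero (t k)]
    simp
  have hNdeg : ∀ k, (N k).natDegree = n - 1 - 1 := by
    intro k
    rw [hN]
    rw [natDegree_prod _ _ fun j _ => X_sub_C_ne_zero (t j)]
    simp [Finset.card_erase_of_mem]
  have hSkdeg : ∀ k, (Sk k).natDegree ≤ n - 1 - 1 := by
    intro k
    rw [hSkfac k]
    exact (natDegree_C_mul_le _ _).trans (le_of_eq (hNdeg k))
  -- the candidate sum-of-squares polynomial
  set E : ℝ[X] := S ^ 2 + ∑ k, C (P.eval (t k)) * (Sk k) ^ 2 with hE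
  have hEeval : ∀ k, E.eval (t k) = P.eval (t k) := by
    intro k
    rw [hE, eval_add, eval_pow, hSroot k, eval_finset_sum]
    rw [Finset.sum_eq_single k]
    · simp [hSk_self k]
    · intro j _ hjk
      simp [hSk_ne j k (Ne.symm hjk)]
    · simp
  have hE'eval : ∀ k, (derivative E).eval (t k)
      = 2 * P.eval (t k) * (w k * (derivative (N k)).eval (t k)) := by
    intro k
    rw [hE, derivative_add, derivative_sum, eval_add, derivative_pow, eval_mul, eval_mul,
      eval_pow, hSroot k, eval_finset_sum]
    rw [Finset.sum_eq_single k]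
    · rw [derivative_C_mul, derivative_pow, eval_mul, eval_C, eval_mul, eval_mul, eval_pow,
        hSk_self k, hSk' k]
      simp only [eval_C]
      ring
    · intro j _ hjk
      rw [derivative_C_mul, derivative_pow, eval_mul, eval_C, eval_mul, eval_mul, eval_pow,
        hSk_ne j k (Ne.symm hjk)]
      simp only [eval_C]
      ring
    · simp
  -- the key pointwise equivalence
  have hkey : ∀ k,
      ((derivative P).eval (t k) * (derivative S).eval (t k)
        = P.eval (t k) * (derivative (derivative S)).eval (t k))
      ↔ (derivative (P - E)).eval (t k) = 0 := by
    intro k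
    rw [derivative_sub, eval_sub, hE'eval k, hS'val k, hS''val k, hwval k]
    have h0 := hNk0 k
    constructor
    · intro h
      rw [sub_eq_zero]
      field_simp
      linear_combination h
    · intro h
      rw [sub_eq_zero] at h
      field_simp at h
      linear_combination h
  -- first equivalence
  have iff1 : (P = E) ↔
      (∀ k, (derivative P).eval (t k) * (derivative S).eval (t k)
          = P.eval (t k) * (derivative (derivative S)).eval (t k)) := by
    constructor
    · intro hid k
      rw [hkey k, hid, sub_self]
      simp
    · intro hcond
      have hD'0 : ∀ k, (derivative (P - E)).eval (t k) = 0 := fun k => (hkey k).mp (hcond k)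
      have hDroot : ∀ k, (P - E).eval (t k) = 0 := by
        intro k; rw [eval_sub, hEeval k, sub_self]
      obtain ⟨R, hR⟩ := hdvd _ hDroot
      have hRroot : ∀ k, R.eval (t k) = 0 := by
        intro k
        have h := hD'0 k
        rw [hR, derivative_mul, eval_add, eval_mul, eval_mul, hSroot k, zero_mul, add_zero,
          hS'val k] at h
        exact (mul_eq_zero.mp h).resolve_left (hNk0 k)
      obtain ⟨R2, hR2⟩ := hdvd _ hRroot
      by_cases hR20 : R2 = 0
      · rw [← sub_eq_zero]
        rw [hR, hR2, hR20, mul_zero, mul_zero]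
      · exfalso
        have hD0 : P - E ≠ 0 := by
          rw [hR, hR2]
          exact mul_ne_zero hSmonic.ne_zero (mul_ne_zero hSmonic.ne_zero hR20)
        -- lower bound on natDegree
        have hlow : 2 * (n - 1) ≤ (P - E).natDegree := by
          rw [hR, hR2, natDegree_mul hSmonic.ne_zero (mul_ne_zero hSmonic.ne_zero hR20),
            natDegree_mul hSmonic.ne_zero hR20, hSdeg]
          omega
        -- upper bound : degree (P - E) < 2*(n-1)
        have hdegP : P.degree = ((2 * (n - 1) : ℕ) : WithBot ℕ) := by
          rw [degree_eq_natDegree hPmonic.ne_zero, hPdeg]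
          exact congrArg Nat.cast (by omega)
        have hS2 : (S ^ 2).natDegree = 2 * (n - 1) := by
          rw [hSmonic.natDegree_pow, hSdeg]
        have h1 : (P - S ^ 2).degree < ((2 * (n - 1) : ℕ) : WithBot ℕ) := by
          have hdq : P.degree = (S ^ 2).degree := by
            rw [hdegP, degree_eq_natDegree (hSmonic.pow 2).ne_zero, hS2]
          have hlc : P.leadingCoeff = (S ^ 2).leadingCoeff := by
            rw [hPmonic.leadingCoeff, (hSmonic.pow 2).leadingCoeff]
          have h := degree_sub_lt hdq hPmonic.ne_zero hlc
          rwa [hdegP] at h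
        have h2 : (∑ k, C (P.eval (t k)) * (Sk k) ^ 2).degree
            < ((2 * (n - 1) : ℕ) : WithBot ℕ) := by
          refine lt_of_le_of_lt (degree_sum_le _ _) ?_
          refine (Finset.sup_lt_iff (WithBot.bot_lt_coe _)).mpr ?_
          intro j _
          refine lt_of_le_of_lt degree_le_natDegree ?_
          have hb : (C (P.eval (t j)) * Sk j ^ 2).natDegree ≤ 2 * (n - 1) - 2 := by
            refine (natDegree_C_mul_le _ _).trans ?_
            refine natDegree_pow_le.trans ?_
            have := hSkdeg j
            omega
          exact_mod_cast lt_of_le_of_lt hb (by omega)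
        have hup : (P - E).degree < ((2 * (n - 1) : ℕ) : WithBot ℕ) := by
          have hsplit : P - E = (P - S ^ 2) - ∑ k, C (P.eval (t k)) * (Sk k) ^ 2 := by
            rw [hE]; ring
          rw [hsplit]
          exact lt_of_le_of_lt (degree_sub_le _ _) (max_lt h1 h2)
        have := (natDegree_lt_iff_degree_lt hD0).mpr hup
        omega
  refine ⟨iff1, iff1.trans ?_⟩
  constructor
  · intro hcond
    refine hdvd _ fun k => ?_
    rw [eval_sub, eval_mul, eval_mul, hcond k, sub_self]
  · rintro ⟨G, hG⟩ k
    have h : (derivative P * derivative S - P * derivative (derivative S)).eval (t k) = 0 := by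
      rw [hG, eval_mul, hSroot k, zero_mul]
    rw [eval_sub, eval_mul, eval_mul, sub_eq_zero] at h
    exact h
end

section
/- Let n ≥ 2, let x_1 < x_2 < … < x_n be reals, r_1, …, r_n > 0, and ζ_1, …, ζ_{n-1} ∈ ℍ. Define f(x) = -∑_{k=1}^n r_k/(x - x_k), Q(x) = ∏_{k=1}^n (x - x_k), and P(x) = ∏_{j=1}^{n-1} (x - ζ_j)(x - conj(ζ_j)). Then the following are equivalent: (i) Q(x)²·f'(x) = (∑_{k=1}^n r_k)·P(x) for all real x distinct from x_1, …, x_n (i.e., f has critical points precisely ζ_1, …, ζ_{n-1} and their conjugates, with multiplicity); (ii) there exist a real polynomial R of exact degree 2n-4 and a constant c > 0 such that P·Q'' - P'·Q' + R·Q = 0 and r_k = c·P(x_k)/∏_{j≠k}(x_k - x_j)² for every k = 1, …, n. -/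
/-!
Off the poles, `Q² f' = S := ∑ k, r k · Q_k²` with `Q_k = Q / (X - x k)`, so (i) says
`S = (∑ k, r k) · P`. At a node, `S(x k) = r k Q'(x k)²` and `S'(x k) = r k Q'(x k) Q''(x k)`.
Hence `S = c P` makes the Wronskian `P Q'' - P' Q'` vanish at every node, so `Q` divides it, and
its leading coefficient `-n(n-1)` fixes the degree of the quotient. Conversely, the weights and the
differential equation make every `x k` a double root of `S - c P`, a polynomial of degree
`≤ 2n - 2 < deg Q²`; so `S = c P`, and leading coefficients give `c = ∑ k, r k`.
-/

open Polynomial Finset Complex ComplexConjugate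

namespace Polynomial

theorem sq_X_sub_C_dvd {R : Type*} [CommRing R] [IsDomain R] {p : R[X]} {a : R}
    (h₀ : p.IsRoot a) (h₁ : (derivative p).IsRoot a) : (X - C a) ^ 2 ∣ p := by
  rcases eq_or_ne p 0 with rfl | hp
  · exact dvd_zero _
  · exact (le_rootMultiplicity_iff hp).1 ((one_lt_rootMultiplicity_iff_isRoot hp).2 ⟨h₀, h₁⟩)

theorem eval_derivative_X_sub_C_mul {R : Type*} [CommRing R] (a : R) (q : R[X]) :
    (derivative ((X - C a) * q)).eval a = q.eval a := by
  simp

theorem eval_derivative_derivative_X_sub_C_mul {R : Type*} [CommRing R] (a : R) (q : R[X]) :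
    (derivative (derivative ((X - C a) * q))).eval a = 2 * (derivative q).eval a := by
  simp only [derivative_mul, derivative_sub, derivative_X, derivative_C, sub_zero, one_mul,
    derivative_add, eval_add, eval_mul, eval_sub, eval_X, eval_C, sub_self, zero_mul, add_zero]
  ring

theorem coeff_wronskian_of_natDegree_le {R : Type*} [CommRing R] {a b : R[X]} {p q : ℕ}
    (ha : a.natDegree ≤ p + 1) (hb : b.natDegree ≤ q + 1) :
    (wronskian a b).coeff (p + q + 1) = ((q : R) - p) * a.coeff (p + 1) * b.coeff (q + 1) := by
  have hb' : (derivative b).natDegree ≤ q := (natDegree_derivative_le b).trans (by omega)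
  have ha' : (derivative a).natDegree ≤ p := (natDegree_derivative_le a).trans (by omega)
  rw [wronskian, coeff_sub, show p + q + 1 = p + 1 + q by ring,
    coeff_mul_add_eq_of_natDegree_le ha hb', show p + 1 + q = p + (q + 1) by ring,
    coeff_mul_add_eq_of_natDegree_le ha' hb, coeff_derivative, coeff_derivative]
  ring

theorem natDegree_wronskian_eq {R : Type*} [CommRing R] {a b : R[X]} {p q : ℕ}
    (ha : a.natDegree ≤ p + 1) (hb : b.natDegree ≤ q + 1)
    (h : ((q : R) - p) * a.coeff (p + 1) * b.coeff (q + 1) ≠ 0) :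
    (wronskian a b).natDegree = p + q + 1 := by
  rw [← coeff_wronskian_of_natDegree_le ha hb] at h
  have hw : wronskian a b ≠ 0 := fun h0 => h (by rw [h0, coeff_zero])
  have := natDegree_wronskian_lt_add hw
  exact le_antisymm (by omega) (le_natDegree_of_ne_zero h)

theorem nodal_pow_dvd {K ι : Type*} [Field K] {s : Finset ι} {v : ι → K}
    (hv : Function.Injective v) {p : K[X]} (m : ℕ) (h : ∀ i ∈ s, (X - C (v i)) ^ m ∣ p) :
    Lagrange.nodal s v ^ m ∣ p := by
  rw [Lagrange.nodal, ← prod_pow]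
  exact Finset.prod_dvd_of_coprime
    (fun i _ j _ hij => (pairwise_coprime_X_sub_C hv hij).pow) h

end Polynomial

open Lagrange

section DerivNumerator

variable {K ι : Type*} [Field K] [Fintype ι] [DecidableEq ι] (x r : ι → K)

/-- `Q² f'`, where `Q = nodal univ x` and `f = -∑ k, r k / (X - x k)`. -/
noncomputable def derivNumerator : K[X] :=
  ∑ k, C (r k) * nodal (univ.erase k) x ^ 2

theorem eval_nodal_erase_node_of_ne {k m : ι} (hmk : m ≠ k) :
    (nodal (univ.erase m) x).eval (x k) = 0 :=
  eval_nodal_at_node (mem_erase.2 ⟨hmk.symm, mem_univ k⟩)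

theorem eval_derivNumerator_node (k : ι) :
    (derivNumerator x r).eval (x k) = r k * (derivative (nodal univ x)).eval (x k) ^ 2 := by
  rw [derivNumerator, eval_finsetSum,
    Fintype.sum_eq_single k fun m hmk => by simp [eval_nodal_erase_node_of_ne x hmk],
    nodal_eq_mul_nodal_erase (mem_univ k), eval_derivative_X_sub_C_mul]
  simp

theorem eval_derivative_derivNumerator_node (k : ι) :
    (derivative (derivNumerator x r)).eval (x k) =
      r k * (derivative (nodal univ x)).eval (x k) *
        (derivative (derivative (nodal univ x))).eval (x k) := by
  rw [derivNumerator, derivative_sum, eval_finsetSum,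
    Fintype.sum_eq_single k fun m hmk => by
      simp [derivative_sq, eval_nodal_erase_node_of_ne x hmk],
    nodal_eq_mul_nodal_erase (mem_univ k), eval_derivative_X_sub_C_mul,
    eval_derivative_derivative_X_sub_C_mul]
  simp only [derivative_mul, derivative_C, zero_mul, derivative_sq, zero_add, eval_mul, eval_C]
  ring

theorem eval_derivative_nodal_node (k : ι) :
    (derivative (nodal univ x)).eval (x k) = ∏ j ∈ univ.erase k, (x k - x j) := by
  rw [eval_nodal_derivative_eval_node_eq (mem_univ k), eval_nodal]

theorem eval_derivative_nodal_node_ne_zero {x : ι → K} (hx : Function.Injective x) (k : ι) :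
    (derivative (nodal univ x)).eval (x k) ≠ 0 := by
  simpa [nodalWeight_eq_eval_derivative_nodal (mem_univ k)] using
    nodalWeight_ne_zero hx.injOn (mem_univ k)

theorem natDegree_nodal_erase_sq (k : ι) :
    (nodal (univ.erase k) x ^ 2).natDegree = 2 * (Fintype.card ι - 1) := by
  rw [natDegree_pow, natDegree_nodal, card_erase_of_mem (mem_univ k), card_univ]

theorem natDegree_derivNumerator_le :
    (derivNumerator x r).natDegree ≤ 2 * (Fintype.card ι - 1) :=
  natDegree_sum_le_of_forall_le _ _ fun k _ =>
    (natDegree_C_mul_le _ _).trans (natDegree_nodal_erase_sq x k).le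

theorem coeff_derivNumerator :
    (derivNumerator x r).coeff (2 * (Fintype.card ι - 1)) = ∑ k, r k := by
  rw [derivNumerator, finsetSum_coeff]
  refine sum_congr rfl fun k _ => ?_
  rw [coeff_C_mul, ← natDegree_nodal_erase_sq x k, (nodal_monic.pow 2).coeff_natDegree, mul_one]

end DerivNumerator

section Analytic

variable {𝕜 ι : Type*} [NontriviallyNormedField 𝕜] [Fintype ι] (x r : ι → 𝕜)

theorem hasDerivAt_neg_sum_div_sub {s : 𝕜} (hs : ∀ k, s ≠ x k) :
    HasDerivAt (fun t => -∑ k, r k / (t - x k)) (∑ k, r k / (s - x k) ^ 2) s := by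
  have hterm : ∀ k, HasDerivAt (fun t => r k / (t - x k)) (-(r k / (s - x k) ^ 2)) s := fun k => by
    simpa [div_eq_mul_inv] using
      (((hasDerivAt_id s).sub_const (x k)).inv (sub_ne_zero.2 (hs k))).const_mul (r k)
  simpa using (HasDerivAt.fun_sum fun k _ => hterm k).fun_neg

theorem eval_nodal_sq_mul_deriv [DecidableEq ι] {s : 𝕜} (hs : ∀ k, s ≠ x k) :
    (nodal univ x).eval s ^ 2 * deriv (fun t => -∑ k, r k / (t - x k)) s =
      (derivNumerator x r).eval s := by
  rw [(hasDerivAt_neg_sum_div_sub x r hs).deriv, derivNumerator, eval_finsetSum, mul_sum]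
  refine sum_congr rfl fun k _ => ?_
  have hsk : s - x k ≠ 0 := sub_ne_zero.2 (hs k)
  rw [nodal_eq_mul_nodal_erase (mem_univ k)]
  simp only [eval_mul, eval_sub, eval_X, eval_C, eval_pow]
  field_simp

theorem forall_eval_nodal_sq_mul_deriv_eq_iff [DecidableEq ι] (c : 𝕜) (P : 𝕜[X]) :
    (∀ s, (∀ k, s ≠ x k) →
        (nodal univ x).eval s ^ 2 * deriv (fun t => -∑ k, r k / (t - x k)) s = c * P.eval s) ↔
      derivNumerator x r = C c * P := by
  constructor
  · intro h
    refine eq_of_infinite_eval_eq _ _ ((Set.finite_range x).infinite_compl.mono fun s hs => ?_)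
    have hs' : ∀ k, s ≠ x k := fun k hk => hs ⟨k, hk.symm⟩
    simpa [← eval_nodal_sq_mul_deriv x r hs'] using h s hs'
  · rintro h s hs
    rw [eval_nodal_sq_mul_deriv x r hs, h, eval_mul, eval_C]

end Analytic

section VanVleck

variable {K ι : Type*} [Field K] [Fintype ι] [DecidableEq ι] {x : ι → K} (r : ι → K)
  {c : K} {P : K[X]}

theorem isRoot_wronskian_of_derivNumerator_eq (hc : c ≠ 0) (h : derivNumerator x r = C c * P)
    (k : ι) : (wronskian P (derivative (nodal univ x))).IsRoot (x k) := by
  have h₀ := congrArg (eval (x k)) h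
  have h₁ := congrArg (fun p => (derivative p).eval (x k)) h
  simp only [eval_derivNumerator_node, eval_derivative_derivNumerator_node, derivative_C_mul,
    eval_mul, eval_C] at h₀ h₁
  refine mul_left_cancel₀ hc ?_
  simp only [wronskian, eval_sub, eval_mul, mul_zero]
  linear_combination (eval (x k) (derivative (nodal univ x))) * h₁ -
    (eval (x k) (derivative (derivative (nodal univ x)))) * h₀

theorem exists_wronskian_add_mul_nodal_eq_zero [CharZero K] (hx : Function.Injective x)
    (hn : 2 ≤ Fintype.card ι) (hPm : P.Monic) (hPdeg : P.natDegree = 2 * (Fintype.card ι - 1))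
    (hc : c ≠ 0) (h : derivNumerator x r = C c * P) :
    ∃ R : K[X], R.degree = (2 * Fintype.card ι - 4 : ℕ) ∧
      wronskian P (derivative (nodal univ x)) + R * nodal univ x = 0 := by
  obtain ⟨m, hm⟩ := Nat.exists_eq_add_of_le' hn
  have hQdeg : (nodal univ x).natDegree = m + 2 := by rw [natDegree_nodal, card_univ, hm]
  have hWdeg : (wronskian P (derivative (nodal univ x))).natDegree = 2 * m + 1 + m + 1 := by
    refine natDegree_wronskian_eq (by omega)
      ((natDegree_derivative_le _).trans (by omega)) ?_
    rw [coeff_derivative, show 2 * m + 1 + 1 = P.natDegree by omega, hPm.coeff_natDegree,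
      show m + 1 + 1 = (nodal univ x).natDegree by omega, nodal_monic.coeff_natDegree]
    have hmp : (m : K) ≠ (2 * m + 1 : ℕ) := by exact_mod_cast (by omega : m ≠ 2 * m + 1)
    rw [one_mul, mul_one]
    exact mul_ne_zero (sub_ne_zero.2 hmp) (Nat.cast_add_one_ne_zero _)
  obtain ⟨R, hR⟩ : nodal univ x ∣ wronskian P (derivative (nodal univ x)) := by
    simpa using nodal_pow_dvd hx 1 fun k _ => by
      simpa using dvd_iff_isRoot.2 (isRoot_wronskian_of_derivNumerator_eq r hc h k)
  have hR₀ : R ≠ 0 := by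
    rintro rfl
    rw [hR, mul_zero, natDegree_zero] at hWdeg
    omega
  refine ⟨-R, ?_, by rw [hR]; ring⟩
  have hRdeg := natDegree_mul (nodal_ne_zero (s := univ) (v := x)) hR₀
  rw [← hR, hWdeg, hQdeg] at hRdeg
  rw [degree_neg, degree_eq_natDegree hR₀]
  exact congrArg _ (by omega)

theorem derivNumerator_eq_of_wronskian_add_mul_nodal_eq_zero [Nonempty ι]
    (hx : Function.Injective x) (hPdeg : P.natDegree ≤ 2 * (Fintype.card ι - 1)) {R : K[X]}
    (hW : wronskian P (derivative (nodal univ x)) + R * nodal univ x = 0)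
    (hr : ∀ k, r k * (derivative (nodal univ x)).eval (x k) ^ 2 = c * P.eval (x k)) :
    derivNumerator x r = C c * P := by
  have hWk : ∀ k, P.eval (x k) * (derivative (derivative (nodal univ x))).eval (x k) =
      (derivative P).eval (x k) * (derivative (nodal univ x)).eval (x k) := fun k => by
    have := congrArg (eval (x k)) hW
    simp only [wronskian, eval_add, eval_sub, eval_mul, eval_nodal_at_node (mem_univ k),
      mul_zero, add_zero, eval_zero] at this
    exact sub_eq_zero.1 this
  have hdvd : nodal univ x ^ 2 ∣ derivNumerator x r - C c * P := by
    refine nodal_pow_dvd hx 2 fun k _ => sq_X_sub_C_dvd ?_ ?_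
    · simp [eval_derivNumerator_node, hr k]
    · refine mul_right_cancel₀ (eval_derivative_nodal_node_ne_zero hx k) ?_
      simp only [derivative_sub, derivative_C_mul, eval_sub, eval_mul, eval_C,
        eval_derivative_derivNumerator_node, zero_mul]
      linear_combination (eval (x k) (derivative (derivative (nodal univ x)))) * hr k + c * hWk k
  refine sub_eq_zero.1 (eq_zero_of_dvd_of_natDegree_lt hdvd ?_)
  have hpos := Fintype.card_pos (α := ι)
  calc (derivNumerator x r - C c * P).natDegree
      ≤ 2 * (Fintype.card ι - 1) :=
        (natDegree_sub_le _ _).trans (max_le (natDegree_derivNumerator_le x r)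
          ((natDegree_C_mul_le _ _).trans hPdeg))
    _ < (nodal univ x ^ 2).natDegree := by
        rw [natDegree_pow, natDegree_nodal, card_univ]
        omega

theorem sum_eq_of_derivNumerator_eq (hPm : P.Monic)
    (hPdeg : P.natDegree = 2 * (Fintype.card ι - 1)) (h : derivNumerator x r = C c * P) :
    ∑ k, r k = c := by
  have hcoeff : (derivNumerator x r).coeff (2 * (Fintype.card ι - 1)) =
      (C c * P).coeff (2 * (Fintype.card ι - 1)) := by rw [h]
  rwa [coeff_derivNumerator, coeff_C_mul, ← hPdeg, hPm.coeff_natDegree, mul_one] at hcoeff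

end VanVleck

theorem Polynomial.monic_and_natDegree_of_map_eq_prod {R S ι : Type*} [CommRing R] [CommRing S]
    [Nontrivial S] [Fintype ι] {f : R →+* S} (hf : Function.Injective f) {P : R[X]}
    {a b : ι → S} (hP : P.map f = ∏ j, (X - C (a j)) * (X - C (b j))) :
    P.Monic ∧ P.natDegree = 2 * Fintype.card ι := by
  rw [prod_mul_distrib, ← nodal_eq, ← nodal_eq] at hP
  have hmonic : (nodal univ a * nodal univ b).Monic := nodal_monic.mul nodal_monic
  refine ⟨hf.monic_map_iff.2 (hP ▸ hmonic), ?_⟩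
  rw [← natDegree_map_eq_of_injective hf, hP, nodal_monic.natDegree_mul nodal_monic,
    natDegree_nodal, natDegree_nodal, card_univ]
  ring

theorem critical_points_iff_van_vleck_general
    (n : ℕ) (hn : 2 ≤ n) (x : Fin n → ℝ) (hx : StrictMono x)
    (r : Fin n → ℝ) (hr : ∀ k, 0 < r k)
    (ζ : Fin (n - 1) → ℂ)
    (f : ℝ → ℝ) (hf : f = fun s => -∑ k, r k / (s - x k))
    (Q : Polynomial ℝ) (hQ : Q = ∏ k, (X - C (x k)))
    (P : Polynomial ℝ)
    (hP : P.map (algebraMap ℝ ℂ) = ∏ j, (X - C (ζ j)) * (X - C (conj (ζ j)))) :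
    (∀ s : ℝ, (∀ k, s ≠ x k) →
        (Q.eval s) ^ 2 * deriv f s = (∑ k, r k) * P.eval s)
    ↔
    (∃ (R : Polynomial ℝ) (c : ℝ), R.degree = (2 * n - 4 : ℕ) ∧ 0 < c ∧
      P * derivative (derivative Q) - derivative P * derivative Q + R * Q = 0 ∧
      ∀ k, r k = c * P.eval (x k) / ∏ j ∈ Finset.univ.erase k, (x k - x j) ^ 2) := by
  obtain ⟨hPm, hPdeg⟩ := monic_and_natDegree_of_map_eq_prod (algebraMap ℝ ℂ).injective hP
  rw [Fintype.card_fin] at hPdeg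
  obtain rfl : Q = nodal univ x := hQ
  subst hf
  have hweight : ∀ k c, r k = c * P.eval (x k) / ∏ j ∈ univ.erase k, (x k - x j) ^ 2 ↔
      r k * (derivative (nodal univ x)).eval (x k) ^ 2 = c * P.eval (x k) := fun k c => by
    rw [prod_pow, ← eval_derivative_nodal_node,
      eq_div_iff (pow_ne_zero 2 (eval_derivative_nodal_node_ne_zero hx.injective k))]
  simp_rw [hweight, forall_eval_nodal_sq_mul_deriv_eq_iff]
  constructor
  · intro h
    have hc : 0 < ∑ k, r k := sum_pos (fun k _ => hr k) (univ_nonempty_iff.2 ⟨⟨0, by omega⟩⟩)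
    obtain ⟨R, hRdeg, hW⟩ := exists_wronskian_add_mul_nodal_eq_zero r hx.injective
      (by simpa using hn) hPm (by simpa using hPdeg) hc.ne' h
    refine ⟨R, ∑ k, r k, by simpa using hRdeg, hc, hW, fun k => ?_⟩
    simpa only [eval_derivNumerator_node, eval_mul, eval_C] using congrArg (eval (x k)) h
  · rintro ⟨R, c, -, -, hW, hweights⟩
    have : Nonempty (Fin n) := ⟨⟨0, by omega⟩⟩
    have h := derivNumerator_eq_of_wronskian_add_mul_nodal_eq_zero r hx.injective
      (by simp [hPdeg]) hW hweights
    rwa [sum_eq_of_derivNumerator_eq r hPm (by simpa using hPdeg) h]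

/-- **Lemma 3.** Let `f(x) = -∑ r k/(x - x k)` with ordered real poles `x 1 < … < x n`
and positive residues, let `Q(x) = ∏ (x - x k)`, and let `P` be the real polynomial
with complex factorization `P(x) = ∏ (x - ζ j)(x - conj (ζ j))`, where the `ζ j` lie in
the upper half-plane. Then `f` has critical points precisely the `ζ j` and their
conjugates (i.e. `Q(x)²·f'(x) = (∑ r k)·P(x)` off the poles) if and only if there are a
real polynomial `R` of exact degree `2n-4` and `c > 0` with `P·Q'' - P'·Q' + R·Q = 0`
and `r k = c·P(x k)/∏_{j≠k}(x k - x j)²` for all `k`. -/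
theorem critical_points_iff_van_vleck
    (n : ℕ) (hn : 2 ≤ n) (x : Fin n → ℝ) (hx : StrictMono x)
    (r : Fin n → ℝ) (hr : ∀ k, 0 < r k)
    (ζ : Fin (n - 1) → ℂ) (hζ : ∀ j, 0 < (ζ j).im)
    (f : ℝ → ℝ) (hf : f = fun s => -∑ k, r k / (s - x k))
    (Q : Polynomial ℝ) (hQ : Q = ∏ k, (X - C (x k)))
    (P : Polynomial ℝ)
    (hP : P.map (algebraMap ℝ ℂ) = ∏ j, (X - C (ζ j)) * (X - C (conj (ζ j)))) :
    (∀ s : ℝ, (∀ k, s ≠ x k) →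
        (Q.eval s) ^ 2 * deriv f s = (∑ k, r k) * P.eval s)
    ↔
    (∃ (R : Polynomial ℝ) (c : ℝ), R.degree = (2 * n - 4 : ℕ) ∧ 0 < c ∧
      P * derivative (derivative Q) - derivative P * derivative Q + R * Q = 0 ∧
      ∀ k, r k = c * P.eval (x k) / ∏ j ∈ Finset.univ.erase k, (x k - x j) ^ 2) :=
  critical_points_iff_van_vleck_general n hn x hx r hr ζ f hf Q hQ P hP
end

section
/- Let n ≥ 2, let ζ_1, …, ζ_{n-1} ∈ ℍ, let P(x) = ∏_{j=1}^{n-1} (x - ζ_j)(x - conj(ζ_j)), let x_1 < x_2 < … < x_n be reals, and let Q(x) = ∏_{k=1}^n (x - x_k). Then there exists a real polynomial R such that P·Q'' - P'·Q' + R·Q = 0 if and only if the equilibrium equations (10) hold: for each k = 1, …, n, ∑_{j≠k} 2/(x_k - x_j) - ∑_{j=1}^{n-1} (1/(x_k - ζ_j) + 1/(x_k - conj(ζ_j))) = 0. -/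
open Polynomial Finset Complex ComplexConjugate


lemma derivFinsetProd {ι : Type*} [DecidableEq ι] (s : Finset ι) (f : ι → ℂ[X]) :
    derivative (∏ i ∈ s, f i) = ∑ b ∈ s, (∏ a ∈ s.erase b, f a) * derivative (f b) := by
  rw [Finset.prod_eq_multiset_prod, Polynomial.derivative_prod, Finset.sum_eq_multiset_sum]
  congr 1

lemma evalDerivProd {ι : Type*} [DecidableEq ι] (s : Finset ι) (w : ι → ℂ) (a : ℂ)
    (h : ∀ i ∈ s, a ≠ w i) :
    eval a (derivative (∏ i ∈ s, (X - C (w i)))) =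
      (∏ i ∈ s, (a - w i)) * ∑ i ∈ s, (a - w i)⁻¹ := by
  rw [derivFinsetProd]
  simp only [derivative_sub, derivative_X, derivative_C, sub_zero, mul_one,
    eval_finset_sum, eval_prod, eval_sub, eval_X, eval_C]
  rw [Finset.mul_sum]
  refine Finset.sum_congr rfl fun i hi => ?_
  have hne : a - w i ≠ 0 := sub_ne_zero.mpr (h i hi)
  rw [← Finset.mul_prod_erase s _ hi]
  field_simp


/-- **Lemma 5, first part.** Let `P` be the real polynomial with complex factorization
`P(x) = ∏ (x - ζ j)(x - conj (ζ j))` for points `ζ j` in the upper half-plane, and let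
`Q(x) = ∏ (x - x k)` for reals `x 1 < … < x n`. Then `Q` is a Stieltjes polynomial for
the equation `P·Q'' - P'·Q' + R·Q = 0` (for some real polynomial `R`) if and only if
the equilibrium equations (10) hold:
`∑_{j≠k} 2/(x k - x j) - ∑ j (1/(x k - ζ j) + 1/(x k - conj (ζ j))) = 0` for all `k`. -/
theorem stieltjes_iff_equilibrium
    (n : ℕ) (hn : 2 ≤ n)
    (ζ : Fin (n - 1) → ℂ) (hζ : ∀ j, 0 < (ζ j).im)
    (P : Polynomial ℝ)
    (hP : P.map (algebraMap ℝ ℂ) = ∏ j, (X - C (ζ j)) * (X - C (conj (ζ j))))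
    (x : Fin n → ℝ) (hx : StrictMono x)
    (Q : Polynomial ℝ) (hQ : Q = ∏ k, (X - C (x k))) :
    (∃ R : Polynomial ℝ,
        P * derivative (derivative Q) - derivative P * derivative Q + R * Q = 0)
    ↔
    (∀ k : Fin n,
      (∑ j ∈ Finset.univ.erase k, 2 / ((x k : ℂ) - (x j : ℂ)))
        - ∑ j, (1 / ((x k : ℂ) - ζ j) + 1 / ((x k : ℂ) - conj (ζ j))) = 0) := by
  classical
  set F : ℝ[X] := P * derivative (derivative Q) - derivative P * derivative Q with hF
  set f := algebraMap ℝ ℂ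
  set y : Fin n → ℂ := fun k => (x k : ℂ) with hy
  have hyinj : Function.Injective y := fun i j h => hx.injective (by
    have := h; simpa [hy, Complex.ofReal_inj] using this)
  -- Step 1
  have step1 : (∃ R : Polynomial ℝ,
      P * derivative (derivative Q) - derivative P * derivative Q + R * Q = 0) ↔ Q ∣ F := by
    constructor
    · rintro ⟨R, hR⟩
      exact ⟨-R, by linear_combination hR⟩
    · rintro ⟨c, hc⟩
      exact ⟨-c, by linear_combination hc⟩
  -- Step 2
  have hQm : Q.Monic := by
    rw [hQ]; exact monic_prod_of_monic _ _ fun k _ => monic_X_sub_C _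
  have hinj : Function.Injective f := (algebraMap ℝ ℂ).injective
  have step2 : Q ∣ F ↔ Q.map f ∣ F.map f := (Polynomial.map_dvd_map f hinj hQm).symm
  have hQc : Q.map f = ∏ k, (X - C (y k)) := by
    rw [hQ, Polynomial.map_prod]
    simp [Polynomial.map_sub, hy, f]
  have hFm : F.map f = P.map f * derivative (derivative (Q.map f))
      - derivative (P.map f) * derivative (Q.map f) := by
    simp [hF, Polynomial.map_sub, Polynomial.map_mul, Polynomial.derivative_map]
  -- Step 3
  have step3 : Q.map f ∣ F.map f ↔ ∀ k, (F.map f).eval (y k) = 0 := by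
    rw [hQc]
    constructor
    · rintro ⟨c, hc⟩ k
      rw [hc, eval_mul, eval_prod, Finset.prod_eq_zero (Finset.mem_univ k) (by simp), zero_mul]
    · intro h
      refine Finset.prod_dvd_of_coprime ?_ fun k _ => dvd_iff_isRoot.mpr (h k)
      exact (Polynomial.pairwise_coprime_X_sub_C hyinj).set_pairwise _
  rw [step1, step2, step3]
  -- Step 4: pointwise evaluation
  refine forall_congr' fun k => ?_
  set a : ℂ := y k with ha
  -- nonvanishing facts
  have hyne : ∀ j ∈ Finset.univ.erase k, a ≠ y j := by
    intro j hj
    exact fun h => (Finset.mem_erase.mp hj).1 (hyinj h.symm)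
  have hζne : ∀ j, a - ζ j ≠ 0 := fun j h => by
    have : (a - ζ j).im = 0 := by rw [h]; simp
    simp [ha, hy, Complex.sub_im] at this
    exact absurd this (hζ j).ne'
  have hζcne : ∀ j, a - conj (ζ j) ≠ 0 := fun j h => by
    have : (a - conj (ζ j)).im = 0 := by rw [h]; simp
    simp [ha, hy, Complex.sub_im, Complex.conj_im] at this
    exact absurd this (hζ j).ne'
  set q : ℂ := ∏ j ∈ Finset.univ.erase k, (a - y j) with hqdef
  have hq : q ≠ 0 := Finset.prod_ne_zero_iff.mpr fun j hj => sub_ne_zero.mpr (hyne j hj)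
  set Q1 : ℂ[X] := ∏ j ∈ Finset.univ.erase k, (X - C (y j)) with hQ1
  have hQc1 : Q.map f = (X - C a) * Q1 := by
    rw [hQc, ← Finset.mul_prod_erase Finset.univ _ (Finset.mem_univ k)]
  have hQ1a : eval a Q1 = q := by simp [hQ1, hqdef, eval_prod]
  have hQ1d : eval a (derivative Q1) = q * ∑ j ∈ Finset.univ.erase k, (a - y j)⁻¹ :=
    evalDerivProd _ _ _ hyne
  have hd1 : derivative (Q.map f) = Q1 + (X - C a) * derivative Q1 := by
    rw [hQc1, derivative_mul, derivative_sub, derivative_X, derivative_C, sub_zero, one_mul]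
  have hevQ' : eval a (derivative (Q.map f)) = q := by
    rw [hd1]; simp [hQ1a]
  have hevQ'' : eval a (derivative (derivative (Q.map f))) =
      2 * (q * ∑ j ∈ Finset.univ.erase k, (a - y j)⁻¹) := by
    rw [hd1, derivative_add, derivative_mul, derivative_sub, derivative_X, derivative_C,
      sub_zero, one_mul]
    simp [hQ1d]
    ring
  -- P part
  set A : ℂ[X] := ∏ j, (X - C (ζ j)) with hA
  set B : ℂ[X] := ∏ j, (X - C (conj (ζ j))) with hB
  have hPc : P.map f = A * B := by
    rw [hP, hA, hB, ← Finset.prod_mul_distrib]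
  set pa : ℂ := ∏ j, (a - ζ j) with hpa
  set pb : ℂ := ∏ j, (a - conj (ζ j)) with hpb
  have hpane : pa ≠ 0 := Finset.prod_ne_zero_iff.mpr fun j _ => hζne j
  have hpbne : pb ≠ 0 := Finset.prod_ne_zero_iff.mpr fun j _ => hζcne j
  have hevA : eval a A = pa := by simp [hA, hpa, eval_prod]
  have hevB : eval a B = pb := by simp [hB, hpb, eval_prod]
  have hevA' : eval a (derivative A) = pa * ∑ j, (a - ζ j)⁻¹ :=
    evalDerivProd _ _ _ fun j _ => fun h => hζne j (by rw [h]; ring)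
  have hevB' : eval a (derivative B) = pb * ∑ j, (a - conj (ζ j))⁻¹ :=
    evalDerivProd _ _ _ fun j _ => fun h => hζcne j (by rw [h]; ring)
  have hevP : eval a (P.map f) = pa * pb := by rw [hPc, eval_mul, hevA, hevB]
  have hevP' : eval a (derivative (P.map f)) =
      pa * pb * ((∑ j, (a - ζ j)⁻¹) + ∑ j, (a - conj (ζ j))⁻¹) := by
    rw [hPc, derivative_mul, eval_add, eval_mul, eval_mul, hevA, hevB, hevA', hevB']
    ring
  have hevF : eval a (F.map f) =
      pa * pb * q * ((∑ j ∈ Finset.univ.erase k, 2 * (a - y j)⁻¹)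
        - ((∑ j, (a - ζ j)⁻¹) + ∑ j, (a - conj (ζ j))⁻¹)) := by
    rw [hFm, eval_sub, eval_mul, eval_mul, hevP, hevP', hevQ', hevQ'',
      ← Finset.mul_sum]
    ring
  have htarget : (∑ j ∈ Finset.univ.erase k, 2 / ((x k : ℂ) - (x j : ℂ)))
        - ∑ j, (1 / ((x k : ℂ) - ζ j) + 1 / ((x k : ℂ) - conj (ζ j)))
      = (∑ j ∈ Finset.univ.erase k, 2 * (a - y j)⁻¹)
        - ((∑ j, (a - ζ j)⁻¹) + ∑ j, (a - conj (ζ j))⁻¹) := by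
    rw [Finset.sum_add_distrib]
    simp [div_eq_mul_inv, ha, hy, one_div]
  rw [hevF, htarget]
  have hne : pa * pb * q ≠ 0 := mul_ne_zero (mul_ne_zero hpane hpbne) hq
  constructor
  · intro h
    rcases mul_eq_zero.mp h with h | h
    · exact absurd h hne
    · exact h
  · intro h; rw [h, mul_zero]
end

section
/- Let n ≥ 2, let ζ_1, …, ζ_{n-1} ∈ ℍ, let P(x) = ∏_{j=1}^{n-1} (x - ζ_j)(x - conj(ζ_j)), let t_1 < t_2 < … < t_{n-1} be reals, and let S(x) = ∏_{k=1}^{n-1} (x - t_k). Then there exists a real polynomial R̃ such that P·S'' - P'·S' + R̃·S = 0 if and only if the equilibrium equations (17) hold: for each k = 1, …, n-1, ∑_{j≠k} 2/(t_k - t_j) - ∑_{j=1}^{n-1} (1/(t_k - ζ_j) + 1/(t_k - conj(ζ_j))) = 0. -/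
open Polynomial Finset Complex ComplexConjugate

private lemma derivative_finset_prod {R ι : Type*} [CommRing R] [DecidableEq ι]
    (s : Finset ι) (f : ι → R[X]) :
    derivative (∏ i ∈ s, f i) = ∑ i ∈ s, (∏ j ∈ s.erase i, f j) * derivative (f i) := by
  induction s using Finset.induction_on with
  | empty => simp
  | @insert a s ha ih =>
    rw [Finset.prod_insert ha, derivative_mul, ih, Finset.sum_insert ha,
      Finset.erase_insert ha, Finset.mul_sum]
    congr 1
    · ring
    refine Finset.sum_congr rfl fun i hi => ?_
    rw [Finset.erase_insert_of_ne (by rintro rfl; exact ha hi),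
      Finset.prod_insert (fun h => ha (Finset.mem_of_mem_erase h))]
    ring

private lemma logderiv {ι : Type*} [DecidableEq ι] (s : Finset ι) (a : ι → ℂ) (x : ℂ)
    (h : ∀ j ∈ s, x - a j ≠ 0) :
    eval x (derivative (∏ j ∈ s, (X - C (a j)))) =
      eval x (∏ j ∈ s, (X - C (a j))) * ∑ j ∈ s, 1 / (x - a j) := by
  rw [derivative_finset_prod, eval_finset_sum, Finset.mul_sum]
  refine Finset.sum_congr rfl fun j hj => ?_
  rw [← Finset.mul_prod_erase s _ hj]
  simp only [derivative_sub, derivative_X, derivative_C, sub_zero, mul_one,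
    eval_mul, eval_prod, eval_sub, eval_X, eval_C]
  field_simp [h j hj]

/-- **Lemma 5, second part.** Let `P` be the real polynomial with complex factorization
`P(x) = ∏ (x - ζ j)(x - conj (ζ j))` for points `ζ j` in the upper half-plane, and let
`S(x) = ∏ (x - t k)` for reals `t 1 < … < t (n-1)`. Then `S` is a Stieltjes polynomial
for the equation `P·S'' - P'·S' + R̃·S = 0` (for some real polynomial `R̃`) if and only
if the equilibrium equations (17) hold:
`∑_{j≠k} 2/(t k - t j) - ∑ j (1/(t k - ζ j) + 1/(t k - conj (ζ j))) = 0` for all `k`. -/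
theorem stieltjes_iff_equilibrium'
    (n : ℕ) (hn : 2 ≤ n)
    (ζ : Fin (n - 1) → ℂ) (hζ : ∀ j, 0 < (ζ j).im)
    (P : Polynomial ℝ)
    (hP : P.map (algebraMap ℝ ℂ) = ∏ j, (X - C (ζ j)) * (X - C (conj (ζ j))))
    (t : Fin (n - 1) → ℝ) (ht : StrictMono t)
    (S : Polynomial ℝ) (hS : S = ∏ k, (X - C (t k))) :
    (∃ R : Polynomial ℝ,
        P * derivative (derivative S) - derivative P * derivative S + R * S = 0)
    ↔
    (∀ k : Fin (n - 1),
      (∑ j ∈ Finset.univ.erase k, 2 / ((t k : ℂ) - (t j : ℂ)))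
        - ∑ j, (1 / ((t k : ℂ) - ζ j) + 1 / ((t k : ℂ) - conj (ζ j))) = 0) := by
  have hinj : Function.Injective t := ht.injective
  set Q : Polynomial ℝ := P * derivative (derivative S) - derivative P * derivative S with hQ
  -- Step 1: existence of R ↔ Q vanishes at each t k
  have step1 : (∃ R : Polynomial ℝ, Q + R * S = 0) ↔ ∀ k, Q.eval (t k) = 0 := by
    constructor
    · rintro ⟨R, hR⟩ k
      have hSk : S.eval (t k) = 0 := by
        rw [hS, eval_prod]
        exact Finset.prod_eq_zero (Finset.mem_univ k) (by simp)
      have := congrArg (eval (t k)) hR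
      simpa [hSk] using this
    · intro h
      have hdvd : S ∣ Q := by
        rw [hS]
        refine Finset.prod_dvd_of_coprime ?_ fun k _ => dvd_iff_isRoot.mpr (h k)
        exact fun i _ j _ hij => Polynomial.pairwise_coprime_X_sub_C hinj hij
      obtain ⟨c, hc⟩ := hdvd
      exact ⟨-c, by rw [hc]; ring⟩
  rw [step1]
  refine forall_congr' fun k => ?_
  -- notation
  set u : ℂ := ((t k : ℝ) : ℂ) with hu
  have hcast : algebraMap ℝ ℂ (t k) = u := rfl
  -- nonvanishing facts
  have htj : ∀ j ∈ Finset.univ.erase k, u - (t j : ℂ) ≠ 0 := by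
    intro j hj
    have : t j ≠ t k := fun h => (Finset.mem_erase.mp hj).1 (hinj h)
    simpa [u, sub_eq_zero] using fun h => this (by exact_mod_cast h.symm)
  have hζj : ∀ j, u - ζ j ≠ 0 := by
    intro j h
    have h1 : ζ j = u := by rw [sub_eq_zero] at h; exact h.symm
    have h2 : (ζ j).im = 0 := by rw [h1, hu]; simp
    linarith [hζ j]
  have hζj' : ∀ j, u - conj (ζ j) ≠ 0 := by
    intro j h
    have h1 : conj (ζ j) = u := by rw [sub_eq_zero] at h; exact h.symm
    have h2 : (conj (ζ j)).im = 0 := by rw [h1, hu]; simp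
    rw [Complex.conj_im] at h2
    linarith [hζ j]
  -- complexified polynomials
  set A : Polynomial ℂ := ∏ j, (X - C (ζ j)) with hA
  set B : Polynomial ℂ := ∏ j, (X - C (conj (ζ j))) with hB
  set Tc : Polynomial ℂ := ∏ j ∈ Finset.univ.erase k, (X - C ((t j : ℂ))) with hTc
  have hSc : S.map (algebraMap ℝ ℂ) = (X - C u) * Tc := by
    rw [hS, Polynomial.map_prod]
    simp only [Polynomial.map_sub, map_X, map_C]
    rw [← Finset.mul_prod_erase Finset.univ _ (Finset.mem_univ k)]
    rfl
  have hPc : P.map (algebraMap ℝ ℂ) = A * B := by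
    rw [hP, Finset.prod_mul_distrib]
  -- evaluations
  have hT0 : Tc.eval u ≠ 0 := by
    rw [eval_prod]
    exact Finset.prod_ne_zero_iff.mpr fun j hj => by simpa using htj j hj
  have hA0 : A.eval u ≠ 0 := by
    rw [eval_prod]
    exact Finset.prod_ne_zero_iff.mpr fun j _ => by simpa using hζj j
  have hB0 : B.eval u ≠ 0 := by
    rw [eval_prod]
    exact Finset.prod_ne_zero_iff.mpr fun j _ => by simpa using hζj' j
  have hT' : eval u (derivative Tc) = Tc.eval u * ∑ j ∈ Finset.univ.erase k, 1 / (u - (t j : ℂ)) :=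
    logderiv _ _ _ htj
  have hA' : eval u (derivative A) = A.eval u * ∑ j, 1 / (u - ζ j) :=
    logderiv _ _ _ fun j _ => hζj j
  have hB' : eval u (derivative B) = B.eval u * ∑ j, 1 / (u - conj (ζ j)) :=
    logderiv _ _ _ fun j _ => hζj' j
  -- eval of Q over ℂ
  have hQc : algebraMap ℝ ℂ (Q.eval (t k)) =
      (A.eval u * B.eval u) * Tc.eval u *
        ((∑ j ∈ Finset.univ.erase k, 2 / (u - (t j : ℂ)))
          - ∑ j, (1 / (u - ζ j) + 1 / (u - conj (ζ j)))) := by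
    have heval : algebraMap ℝ ℂ (Q.eval (t k)) = eval u (Q.map (algebraMap ℝ ℂ)) := by
      rw [eval_map, ← hcast, eval₂_at_apply]
    rw [heval, hQ, Polynomial.map_sub, Polynomial.map_mul, Polynomial.map_mul,
      ← derivative_map, ← derivative_map, ← derivative_map, hSc, hPc]
    simp only [derivative_mul, derivative_add, derivative_sub, derivative_X, derivative_C,
      sub_zero, zero_mul, one_mul, mul_one, zero_add, add_zero]
    simp only [eval_add, eval_mul, eval_sub, eval_X, eval_C, eval_one, sub_self,
      zero_mul, mul_zero, zero_add, add_zero, one_mul, hT', hA', hB']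
    rw [Finset.sum_add_distrib]
    have h2 : (∑ j ∈ Finset.univ.erase k, 2 / (u - (t j : ℂ)))
        = 2 * ∑ j ∈ Finset.univ.erase k, 1 / (u - (t j : ℂ)) := by
      rw [Finset.mul_sum]
      exact Finset.sum_congr rfl fun j _ => by ring
    rw [h2]
    ring
  -- conclude
  constructor
  · intro h
    have h0 : (A.eval u * B.eval u) * Tc.eval u *
        ((∑ j ∈ Finset.univ.erase k, 2 / (u - (t j : ℂ)))
          - ∑ j, (1 / (u - ζ j) + 1 / (u - conj (ζ j)))) = 0 := by
      rw [← hQc, h, map_zero]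
    rcases mul_eq_zero.mp h0 with h' | h'
    · exact absurd h' (mul_ne_zero (mul_ne_zero hA0 hB0) hT0)
    · exact h'
  · intro h
    have h0 : algebraMap ℝ ℂ (Q.eval (t k)) = 0 := by rw [hQc, h, mul_zero]
    rwa [Complex.coe_algebraMap, Complex.ofReal_eq_zero] at h0
end

section
/- Let n ≥ 2, let ζ_1, …, ζ_{n-1} ∈ ℍ, and let t_1 < t_2 < … < t_{n-1} be the unique ordered solution of the equilibrium equations (17); set t_0 = -∞ and t_n = +∞. Fix k_0 ∈ {1, 2, …, n} and a point x_{k_0} ∈ (t_{k_0-1}, t_{k_0}). Then there exist unique points x_k ∈ (t_{k-1}, t_k) for each k ∈ {1, …, n} \ {k_0} such that x_1 < x_2 < … < x_n satisfy the equilibrium equations (10): for each k = 1, …, n, ∑_{j≠k} 2/(x_k - x_j) - ∑_{j=1}^{n-1} (1/(x_k - ζ_j) + 1/(x_k - conj(ζ_j))) = 0. -/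
open Finset Complex ComplexConjugate

/-!
Write `q = ∏ (X - t k)` and `Q = ∏ (X - ζ j) (X - conj ζ j)`, a real polynomial. The equations (17)
say that `Q / q ^ 2` has no simple poles, so `Q = q ^ 2 + ∑ w k (q / (X - t k)) ^ 2` with weights
`w k > 0`. For a level `c` the polynomial `P = (X - c) q - ∑ w k q / (X - t k)` equals
`(S - c) q` with `S s = s - ∑ w k / (s - t k)`, and its Wronskian is `P' q - P q' = Q`.
On each of the `n` gaps cut out by the `t k`, `S` increases from `-∞` to `+∞`, so `P` has exactly
one root in each gap, and differentiating the Wronskian identity at these roots gives (10).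
Conversely, a solution of (10) with one point in each gap coincides, by a comparison principle
for the sums `∑ 2 / (x k - x j)`, with the level configuration on the lowest of the levels
`S (x k)`; hence the solutions are exactly the level sets of `S`, and `x k₀` fixes the level.
-/

open Polynomial Lagrange

namespace Equilibrium

section Algebra

variable {R : Type*} [CommRing R]

lemma eval_derivative_X_sub_C_mul (a : R) (r : R[X]) :
    (derivative ((X - C a) * r)).eval a = r.eval a := by
  simp [derivative_mul]

lemma eval_derivative_derivative_X_sub_C_mul (a : R) (r : R[X]) :
    (derivative (derivative ((X - C a) * r))).eval a = 2 * (derivative r).eval a := by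
  simp [derivative_mul]
  ring

lemma sq_X_sub_C_dvd_of_isRoot_derivative {p : R[X]} {a : R} (h : p.IsRoot a)
    (h' : (derivative p).IsRoot a) : (X - C a) ^ 2 ∣ p := by
  rcases eq_or_ne p 0 with rfl | hp
  · simp
  · exact (le_rootMultiplicity_iff hp).1 ((one_lt_rootMultiplicity_iff_isRoot hp).2 ⟨h, h'⟩)

lemma eval_derivative_mul_eq_of_wronskian {P q Q : R[X]}
    (hW : derivative P * q - P * derivative q = Q) {x : R} (hx : P.IsRoot x) :
    (derivative Q).eval x * (derivative P).eval x
      = Q.eval x * (derivative (derivative P)).eval x := by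
  have hQ' : derivative (derivative P) * q - P * derivative (derivative q) = derivative Q := by
    rw [← hW]
    simp only [derivative_sub, derivative_mul]
    ring
  rw [← hQ', ← hW]
  simp only [eval_sub, eval_mul, hx.eq_zero]
  ring

end Algebra

section Field

variable {K : Type*} [Field K] {ι : Type*} [DecidableEq ι]

lemma eval_derivative_prod {s : Finset ι} {f : ι → K[X]} {x : K}
    (hf : ∀ i ∈ s, (f i).eval x ≠ 0) :
    (derivative (∏ i ∈ s, f i)).eval x
      = (∏ i ∈ s, f i).eval x * ∑ i ∈ s, (derivative (f i)).eval x / (f i).eval x := by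
  rw [derivative_prod_finset, eval_finsetSum, Finset.mul_sum]
  refine Finset.sum_congr rfl fun i hi => ?_
  rw [eval_mul, eval_prod, eval_prod, ← Finset.mul_prod_erase s _ hi]
  field_simp [hf i hi]

lemma eval_derivative_derivative_nodal {s : Finset ι} {v : ι → K} (hv : Set.InjOn v s) {i : ι}
    (hi : i ∈ s) :
    (derivative (derivative (nodal s v))).eval (v i)
      = (derivative (nodal s v)).eval (v i) * ∑ j ∈ s.erase i, 2 / (v i - v j) := by
  have hne : ∀ j ∈ s.erase i, (X - C (v j)).eval (v i) ≠ 0 := fun j hj => by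
    simpa [sub_eq_zero] using fun h => (mem_erase.1 hj).1 (hv (mem_erase.1 hj).2 hi h.symm)
  rw [nodal_eq_mul_nodal_erase hi, eval_derivative_derivative_X_sub_C_mul,
    eval_derivative_X_sub_C_mul, nodal, eval_derivative_prod hne, Finset.mul_sum, Finset.mul_sum,
    Finset.mul_sum]
  refine Finset.sum_congr rfl fun j _ => ?_
  simp only [derivative_X_sub_C, eval_one, eval_sub, eval_X, eval_C]
  ring

variable [Fintype ι]

/-- The equations (17) and (10) both read `IsEquilibrium Q x`, for
`Q = ∏ (X - ζ j) (X - conj ζ j)`. -/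
def IsEquilibrium (Q : K[X]) (x : ι → K) : Prop :=
  ∀ k, ∑ j ∈ univ.erase k, 2 / (x k - x j) = (derivative Q).eval (x k) / Q.eval (x k)

lemma isEquilibrium_iff {Q : K[X]} {x : ι → K} (hx : Function.Injective x)
    (hQ : ∀ k, Q.eval (x k) ≠ 0) :
    IsEquilibrium Q x ↔ ∀ k, (derivative Q).eval (x k) * (derivative (nodal univ x)).eval (x k)
      = Q.eval (x k) * (derivative (derivative (nodal univ x))).eval (x k) := by
  refine forall_congr' fun k => ?_
  have hp : (derivative (nodal univ x)).eval (x k) ≠ 0 := by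
    rw [eval_nodal_derivative_eval_node_eq (mem_univ k)]
    exact eval_nodal_not_at_node fun j hj => hx.ne (mem_erase.1 hj).1.symm
  rw [eval_derivative_derivative_nodal hx.injOn (mem_univ k), eq_div_iff (hQ k)]
  constructor
  · intro h
    rw [← h]
    ring
  · intro h
    exact mul_left_cancel₀ hp (by linear_combination -h)

def nodeWeight (Q : K[X]) (t : ι → K) (k : ι) : K :=
  Q.eval (t k) * nodalWeight univ t k ^ 2

lemma sq_X_sub_C_dvd_sub_nodeWeight_smul {Q : K[X]} {t : ι → K} (ht : Function.Injective t)
    {k : ι} (hbal : (derivative Q).eval (t k) * (derivative (nodal univ t)).eval (t k)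
      = Q.eval (t k) * (derivative (derivative (nodal univ t))).eval (t k)) :
    (X - C (t k)) ^ 2 ∣ Q - nodeWeight Q t k • nodal (univ.erase k) t ^ 2 := by
  set r := nodal (univ.erase k) t with hr_def
  have hr : r.eval (t k) ≠ 0 := eval_nodal_not_at_node fun j hj => ht.ne (mem_erase.1 hj).1.symm
  rw [nodal_eq_mul_nodal_erase (mem_univ k), eval_derivative_X_sub_C_mul,
    eval_derivative_derivative_X_sub_C_mul] at hbal
  have hw : nodeWeight Q t k * r.eval (t k) ^ 2 = Q.eval (t k) := by
    rw [nodeWeight, nodalWeight_eq_eval_nodal_erase_inv, ← hr_def]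
    field_simp
  apply sq_X_sub_C_dvd_of_isRoot_derivative
  · simp [hw]
  · simp only [IsRoot, derivative_sub, derivative_smul, derivative_pow, eval_sub, eval_smul,
      eval_mul, eval_pow, eval_C, smul_eq_mul]
    norm_num
    rw [sub_eq_zero]
    refine mul_right_cancel₀ hr ?_
    linear_combination hbal - 2 * r.derivative.eval (t k) * hw

lemma degree_sum_smul_sq_nodal_erase_lt (w t : ι → K) :
    (∑ k, w k • nodal (univ.erase k) t ^ 2).degree < (2 * Fintype.card ι : ℕ) := by
  refine mem_degreeLT.1 (Submodule.sum_mem _ fun k _ => Submodule.smul_mem _ _ ?_)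
  have := card_erase_lt_of_mem (mem_univ k)
  rw [card_univ] at this
  rw [mem_degreeLT, degree_eq_natDegree (nodal_monic.pow 2).ne_zero, natDegree_pow,
    natDegree_nodal, Nat.cast_lt]
  omega

/-- Partial fractions: `Q / q ^ 2 = 1 + ∑ w k / (X - t k) ^ 2` for `q = nodal univ t`; the
equilibrium condition on `t` says exactly that no simple poles occur. -/
theorem eq_nodal_sq_add_sum {Q : K[X]} {t : ι → K} (ht : Function.Injective t) (hQ : Q.Monic)
    (hdeg : Q.natDegree = 2 * Fintype.card ι)
    (hbal : ∀ k, (derivative Q).eval (t k) * (derivative (nodal univ t)).eval (t k)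
      = Q.eval (t k) * (derivative (derivative (nodal univ t))).eval (t k)) :
    Q = nodal univ t ^ 2 + ∑ k, nodeWeight Q t k • nodal (univ.erase k) t ^ 2 := by
  set q := nodal univ t
  set N := ∑ k, nodeWeight Q t k • nodal (univ.erase k) t ^ 2 with hN_def
  have hdvd_node (k : ι) : (X - C (t k)) ^ 2 ∣ Q - q ^ 2 - N := by
    have hq : (X - C (t k)) ^ 2 ∣ q ^ 2 := pow_dvd_pow_of_dvd (X_sub_C_dvd_nodal t (mem_univ k)) 2
    have hN : (X - C (t k)) ^ 2 ∣ N - nodeWeight Q t k • nodal (univ.erase k) t ^ 2 := by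
      rw [hN_def, ← Finset.add_sum_erase _ _ (mem_univ k), add_sub_cancel_left]
      refine Finset.dvd_sum fun j hj => ?_
      rw [smul_eq_C_mul]
      refine Dvd.dvd.mul_left (pow_dvd_pow_of_dvd ?_ 2) _
      exact X_sub_C_dvd_nodal t (mem_erase.2 ⟨Ne.symm (mem_erase.1 hj).1, mem_univ k⟩)
    convert ((sq_X_sub_C_dvd_sub_nodeWeight_smul ht (hbal k)).sub hq).sub hN using 1
    ring
  have hdvd : q ^ 2 ∣ Q - q ^ 2 - N := by
    have := Fintype.prod_dvd_of_coprime
      (fun i j hij => (pairwise_coprime_X_sub_C ht hij).pow) hdvd_node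
    rwa [Finset.prod_pow, ← nodal_eq] at this
  have hq2 : (q ^ 2).degree = (2 * Fintype.card ι : ℕ) := by
    rw [degree_pow, degree_nodal, card_univ]; norm_cast
  have hQq : (Q - q ^ 2).degree < (2 * Fintype.card ι : ℕ) := by
    have hQdeg : Q.degree = (2 * Fintype.card ι : ℕ) := by rw [degree_eq_natDegree hQ.ne_zero, hdeg]
    rw [← hQdeg]
    exact degree_sub_lt_left (hQdeg.trans hq2.symm) hQ.ne_zero
      (by rw [hQ.leadingCoeff, (nodal_monic.pow 2).leadingCoeff])
  have hE := eq_zero_of_dvd_of_degree_lt hdvd (by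
    rw [hq2]
    exact (degree_sub_le _ _).trans_lt (max_lt hQq (degree_sum_smul_sq_nodal_erase_lt _ t)))
  linear_combination hE

def levelFun (w t : ι → K) (s : K) : K := s - ∑ k, w k / (s - t k)

noncomputable def levelPoly (w t : ι → K) (c : K) : K[X] :=
  (X - C c) * nodal univ t - ∑ k, w k • nodal (univ.erase k) t

lemma eval_levelPoly {w t : ι → K} {c s : K} (hs : ∀ k, s ≠ t k) :
    (levelPoly w t c).eval s = (levelFun w t s - c) * (nodal univ t).eval s := by
  have hterm : ∀ k, w k * (nodal (univ.erase k) t).eval s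
      = w k / (s - t k) * (nodal univ t).eval s := fun k => by
    rw [nodal_eq_mul_nodal_erase (mem_univ k), eval_mul]
    field_simp [sub_ne_zero.2 (hs k)]
    simp
  simp only [levelPoly, levelFun, eval_sub, eval_mul, eval_X, eval_C, eval_finsetSum, eval_smul,
    smul_eq_mul, Finset.sum_congr rfl fun k _ => hterm k, ← Finset.sum_mul]
  ring

lemma degree_sum_smul_nodal_erase_lt (w t : ι → K) (c : K) :
    (∑ k, w k • nodal (univ.erase k) t).degree < ((X - C c) * nodal univ t).degree := by
  have hlt : (∑ k, w k • nodal (univ.erase k) t).degree < #(univ : Finset ι) := by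
    refine mem_degreeLT.1 (Submodule.sum_mem _ fun k _ => Submodule.smul_mem _ _ ?_)
    rw [mem_degreeLT, degree_nodal, Nat.cast_lt]
    exact card_erase_lt_of_mem (mem_univ k)
  rw [degree_mul, degree_X_sub_C, degree_nodal]
  exact hlt.trans_le (by norm_cast; omega)

lemma levelPoly_monic (w t : ι → K) (c : K) : (levelPoly w t c).Monic :=
  ((monic_X_sub_C c).mul nodal_monic).sub_of_left (degree_sum_smul_nodal_erase_lt w t c)

lemma natDegree_levelPoly (w t : ι → K) (c : K) :
    (levelPoly w t c).natDegree = Fintype.card ι + 1 := by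
  rw [levelPoly, natDegree_eq_of_degree_eq (degree_sub_eq_left_of_degree_lt
    (degree_sum_smul_nodal_erase_lt w t c)), natDegree_mul (X_sub_C_ne_zero c) nodal_ne_zero,
    natDegree_X_sub_C, natDegree_nodal, card_univ, add_comm]

lemma wronskian_levelPoly (w t : ι → K) (c : K) :
    derivative (levelPoly w t c) * nodal univ t - levelPoly w t c * derivative (nodal univ t)
      = nodal univ t ^ 2 + ∑ k, w k • nodal (univ.erase k) t ^ 2 := by
  have hsum : ∑ k, w k • nodal (univ.erase k) t ^ 2
      = (∑ k, w k • nodal (univ.erase k) t) * derivative (nodal univ t)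
        - (∑ k, w k • derivative (nodal (univ.erase k) t)) * nodal univ t := by
    rw [Finset.sum_mul, Finset.sum_mul, ← Finset.sum_sub_distrib]
    refine Finset.sum_congr rfl fun k _ => ?_
    rw [smul_mul_assoc, smul_mul_assoc, ← smul_sub, nodal_eq_mul_nodal_erase (mem_univ k),
      derivative_mul, derivative_X_sub_C]
    ring_nf
  rw [hsum, levelPoly]
  simp only [derivative_sub, derivative_mul, derivative_X, derivative_C, derivative_sum,
    derivative_smul]
  ring

theorem isEquilibrium_of_levelFun_eq {Q : K[X]} {t : ι → K} (ht : Function.Injective t)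
    (hQ : Q.Monic) (hdeg : Q.natDegree = 2 * Fintype.card ι) (hQt : ∀ k, Q.eval (t k) ≠ 0)
    (htQ : IsEquilibrium Q t) {κ : Type*} [Fintype κ] [DecidableEq κ]
    (hcard : Fintype.card κ = Fintype.card ι + 1) {x : κ → K} (hx : Function.Injective x)
    (hQx : ∀ i, Q.eval (x i) ≠ 0) (hxt : ∀ i k, x i ≠ t k) {c : K}
    (hc : ∀ i, levelFun (nodeWeight Q t) t (x i) = c) : IsEquilibrium Q x := by
  set P := levelPoly (nodeWeight Q t) t c
  have hroot : ∀ i, P.IsRoot (x i) := fun i => by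
    rw [IsRoot, eval_levelPoly (hxt i), hc i, sub_self, zero_mul]
  have hP : nodal univ x = P := by
    refine (eq_of_monic_of_dvd_of_natDegree_le nodal_monic (levelPoly_monic _ t c) ?_ ?_).symm
    · exact Fintype.prod_dvd_of_coprime (pairwise_coprime_X_sub_C hx)
        fun i => dvd_iff_isRoot.2 (hroot i)
    · rw [natDegree_levelPoly, natDegree_nodal, card_univ, hcard]
  have hW : derivative P * nodal univ t - P * derivative (nodal univ t) = Q := by
    rw [wronskian_levelPoly, ← eq_nodal_sq_add_sum ht hQ hdeg ((isEquilibrium_iff ht hQt).1 htQ)]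
  rw [isEquilibrium_iff hx hQx, hP]
  exact fun i => eval_derivative_mul_eq_of_wronskian hW (hroot i)

end Field

section Real

open Filter Topology

variable {m : ℕ} {t w : Fin m → ℝ}

/-- For increasing `t`, the interval `(t (k - 1), t k)` with `t (-1) = -∞` and `t m = +∞`. -/
def gap (t : Fin m → ℝ) (k : ℕ) : Set ℝ :=
  {s | ∀ j : Fin m, ((j : ℕ) < k → t j < s) ∧ (k ≤ (j : ℕ) → s < t j)}

lemma ne_of_mem_gap {k : ℕ} {s : ℝ} (hs : s ∈ gap t k) (j : Fin m) : s ≠ t j := by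
  rcases lt_or_ge (j : ℕ) k with h | h
  · exact ((hs j).1 h).ne'
  · exact ((hs j).2 h).ne

lemma sub_mul_sub_pos_of_mem_gap {k : ℕ} {s s' : ℝ} (hs : s ∈ gap t k) (hs' : s' ∈ gap t k)
    (j : Fin m) : 0 < (s - t j) * (s' - t j) := by
  rcases lt_or_ge (j : ℕ) k with h | h
  · exact mul_pos (sub_pos.2 ((hs j).1 h)) (sub_pos.2 ((hs' j).1 h))
  · exact mul_pos_of_neg_of_neg (sub_neg.2 ((hs j).2 h)) (sub_neg.2 ((hs' j).2 h))

lemma ordConnected_gap (t : Fin m → ℝ) (k : ℕ) : (gap t k).OrdConnected :=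
  ⟨fun _ hu _ hv _ hs j =>
    ⟨fun h => ((hu j).1 h).trans_le hs.1, fun h => hs.2.trans_lt ((hv j).2 h)⟩⟩

lemma lt_of_mem_gap {k k' : ℕ} (hkk' : k < k') (hk' : k' ≤ m) {s s' : ℝ} (hs : s ∈ gap t k)
    (hs' : s' ∈ gap t k') : s < s' :=
  ((hs ⟨k, by omega⟩).2 le_rfl).trans ((hs' ⟨k, by omega⟩).1 hkk')

lemma strictMono_of_mem_gap {n : ℕ} (hn : n ≤ m + 1) {x : Fin n → ℝ}
    (hx : ∀ k : Fin n, x k ∈ gap t k) : StrictMono x :=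
  fun k k' h => lt_of_mem_gap h (by omega) (hx k) (hx k')

lemma div_le_div_of_le_of_mul_pos {α : Type*} [Field α] [LinearOrder α] [IsStrictOrderedRing α]
    {a b c : α} (hc : 0 ≤ c) (hab : a ≤ b) (h : 0 < a * b) :
    c / b ≤ c / a := by
  have ha : a ≠ 0 := by rintro rfl; simp at h
  have hb : b ≠ 0 := by rintro rfl; simp at h
  have hdiff : c / a - c / b = c * (b - a) / (a * b) := by field_simp
  exact sub_nonneg.1 (hdiff ▸ div_nonneg (mul_nonneg hc (sub_nonneg.2 hab)) h.le)

lemma strictMonoOn_levelFun (hw : ∀ j, 0 ≤ w j) (k : ℕ) :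
    StrictMonoOn (levelFun w t) (gap t k) := by
  intro s hs s' hs' hss'
  have hsum : ∑ j, w j / (s' - t j) ≤ ∑ j, w j / (s - t j) :=
    Finset.sum_le_sum fun j _ => div_le_div_of_le_of_mul_pos (hw j) (by linarith)
      (sub_mul_sub_pos_of_mem_gap hs hs' j)
  simp only [levelFun]
  linarith

lemma continuousOn_levelFun (k : ℕ) : ContinuousOn (levelFun w t) (gap t k) :=
  continuousOn_id.sub (continuousOn_finsetSum _ fun j _ =>
    continuousOn_const.div (continuousOn_id.sub continuousOn_const)
      fun _ hs => sub_ne_zero.2 (ne_of_mem_gap hs j))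

lemma tendsto_levelFun_atBot : Tendsto (levelFun w t) atBot atBot := by
  have hsub (j : Fin m) : Tendsto (fun s => s - t j) atBot atBot := by
    simpa [sub_eq_add_neg] using tendsto_atBot_add_const_right _ (-t j) tendsto_id
  have hsum : Tendsto (fun s => ∑ j, w j / (s - t j)) atBot (𝓝 0) := by
    simpa using tendsto_finsetSum univ fun j _ => tendsto_const_nhds.div_atBot (hsub j)
  exact (tendsto_id.atBot_add hsum.neg).congr fun s => (sub_eq_add_neg _ _).symm

lemma tendsto_levelFun_atTop : Tendsto (levelFun w t) atTop atTop := by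
  have hsub (j : Fin m) : Tendsto (fun s => s - t j) atTop atTop := by
    simpa [sub_eq_add_neg] using tendsto_atTop_add_const_right _ (-t j) tendsto_id
  have hsum : Tendsto (fun s => ∑ j, w j / (s - t j)) atTop (𝓝 0) := by
    simpa using tendsto_finsetSum univ fun j _ => tendsto_const_nhds.div_atTop (hsub j)
  exact (tendsto_id.atTop_add hsum.neg).congr fun s => (sub_eq_add_neg _ _).symm

lemma levelFun_eq_sub_sub (i : Fin m) (s : ℝ) : levelFun w t s
    = (s - ∑ j ∈ univ.erase i, w j / (s - t j)) - w i / (s - t i) := by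
  rw [levelFun, ← Finset.add_sum_erase _ _ (mem_univ i)]
  ring

lemma continuousAt_levelFun_sub (ht : Function.Injective t) (i : Fin m) :
    ContinuousAt (fun s => s - ∑ j ∈ univ.erase i, w j / (s - t j)) (t i) :=
  continuousAt_id.sub (tendsto_finsetSum _ fun _ hj => continuousAt_const.div
    (continuousAt_id.sub continuousAt_const) (sub_ne_zero.2 (ht.ne (mem_erase.1 hj).1.symm)))

lemma tendsto_levelFun_nhdsGT (ht : Function.Injective t) {i : Fin m} (hw : 0 < w i) :
    Tendsto (levelFun w t) (𝓝[>] t i) atBot := by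
  have hsub : Tendsto (fun s => s - t i) (𝓝[>] t i) (𝓝[>] 0) :=
    tendsto_nhdsWithin_of_tendsto_nhds_of_eventually_within _
      (by simpa using ((continuous_sub_right (t i)).tendsto (t i)).mono_left nhdsWithin_le_nhds)
      (by filter_upwards [self_mem_nhdsWithin] with s hs using sub_pos.2 (Set.mem_Ioi.1 hs))
  have hpole : Tendsto (fun s => w i / (s - t i)) (𝓝[>] t i) atTop := by
    simpa [div_eq_mul_inv] using hsub.inv_tendsto_nhdsGT_zero.const_mul_atTop hw
  refine (((continuousAt_levelFun_sub (w := w) ht i).tendsto.mono_left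
    nhdsWithin_le_nhds).add_atBot (tendsto_neg_atTop_atBot.comp hpole)).congr fun s => ?_
  rw [levelFun_eq_sub_sub i, sub_eq_add_neg]
  rfl

lemma tendsto_levelFun_nhdsLT (ht : Function.Injective t) {i : Fin m} (hw : 0 < w i) :
    Tendsto (levelFun w t) (𝓝[<] t i) atTop := by
  have hsub : Tendsto (fun s => s - t i) (𝓝[<] t i) (𝓝[<] 0) :=
    tendsto_nhdsWithin_of_tendsto_nhds_of_eventually_within _
      (by simpa using ((continuous_sub_right (t i)).tendsto (t i)).mono_left nhdsWithin_le_nhds)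
      (by filter_upwards [self_mem_nhdsWithin] with s hs using sub_neg.2 (Set.mem_Iio.1 hs))
  have hpole : Tendsto (fun s => w i / (s - t i)) (𝓝[<] t i) atBot := by
    simpa [div_eq_mul_inv] using hsub.inv_tendsto_nhdsLT_zero.const_mul_atBot hw
  refine (((continuousAt_levelFun_sub (w := w) ht i).tendsto.mono_left
    nhdsWithin_le_nhds).add_atTop (tendsto_neg_atBot_atTop.comp hpole)).congr fun s => ?_
  rw [levelFun_eq_sub_sub i, sub_eq_add_neg]
  rfl

lemma exists_mem_gap_levelFun_lt (ht : StrictMono t) (hw : ∀ j, 0 < w j) {k : ℕ} (hk : k ≤ m)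
    (c : ℝ) : ∃ s ∈ gap t k, levelFun w t s < c := by
  rcases Nat.eq_zero_or_pos k with rfl | hk0
  · have hgap : ∀ᶠ s in atBot, s ∈ gap t 0 := eventually_all.2 fun j => by
      filter_upwards [eventually_lt_atBot (t j)] with s hs using ⟨by simp, fun _ => hs⟩
    exact (hgap.and (tendsto_levelFun_atBot.eventually_lt_atBot c)).exists
  · set i : Fin m := ⟨k - 1, by omega⟩
    have hgap : ∀ᶠ s in 𝓝[>] t i, s ∈ gap t k := eventually_all.2 fun j => by
      rcases lt_or_ge (j : ℕ) k with hj | hj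
      · filter_upwards [self_mem_nhdsWithin] with s hs
        exact ⟨fun _ => (ht.monotone (Fin.le_def.2 (by simp [i]; omega))).trans_lt hs,
          fun h => absurd h (by omega)⟩
      · filter_upwards [nhdsWithin_le_nhds (eventually_lt_nhds
          (ht (Fin.lt_def.2 (by simp [i]; omega) : i < j)))] with s hs
        exact ⟨fun h => absurd h (by omega), fun _ => hs⟩
    exact (hgap.and ((tendsto_levelFun_nhdsGT ht.injective (hw i)).eventually_lt_atBot c)).exists

lemma exists_mem_gap_lt_levelFun (ht : StrictMono t) (hw : ∀ j, 0 < w j) (k : ℕ) (c : ℝ) :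
    ∃ s ∈ gap t k, c < levelFun w t s := by
  by_cases hk : k < m
  · set i : Fin m := ⟨k, hk⟩
    have hgap : ∀ᶠ s in 𝓝[<] t i, s ∈ gap t k := eventually_all.2 fun j => by
      rcases lt_or_ge (j : ℕ) k with hj | hj
      · filter_upwards [nhdsWithin_le_nhds (eventually_gt_nhds
          (ht (Fin.lt_def.2 (by simp [i]; omega) : j < i)))] with s hs
        exact ⟨fun _ => hs, fun h => absurd h (by omega)⟩
      · filter_upwards [self_mem_nhdsWithin] with s hs
        exact ⟨fun h => absurd h (by omega),
          fun _ => hs.trans_le (ht.monotone (Fin.le_def.2 (by simp [i]; omega)))⟩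
    exact (hgap.and ((tendsto_levelFun_nhdsLT ht.injective (hw i)).eventually_gt_atTop c)).exists
  · have hgap : ∀ᶠ s in atTop, s ∈ gap t k := eventually_all.2 fun j => by
      filter_upwards [eventually_gt_atTop (t j)] with s hs using ⟨fun _ => hs, by omega⟩
    exact (hgap.and (tendsto_levelFun_atTop.eventually_gt_atTop c)).exists

lemma exists_mem_gap_levelFun_eq (ht : StrictMono t) (hw : ∀ j, 0 < w j) {k : ℕ} (hk : k ≤ m)
    (c : ℝ) : ∃ s ∈ gap t k, levelFun w t s = c := by
  obtain ⟨u, hu, hlt⟩ := exists_mem_gap_levelFun_lt ht hw hk c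
  obtain ⟨v, hv, hgt⟩ := exists_mem_gap_lt_levelFun ht hw k c
  exact (ordConnected_gap t k).isPreconnected.intermediate_value hu hv (continuousOn_levelFun k)
    ⟨hlt.le, hgt.le⟩

/-- Moving the other points of an ordered configuration to the left, with the `i`-th one fixed,
decreases every term of the sum at `i`. -/
lemma eq_of_le_of_sum_div_sub_eq {ι : Type*} [Fintype ι] [DecidableEq ι] [LinearOrder ι]
    {y z : ι → ℝ} (hy : StrictMono y) (hz : StrictMono z) (hzy : ∀ j, z j ≤ y j) {i : ι}
    (hi : z i = y i)
    (hsum : ∑ j ∈ univ.erase i, 2 / (z i - z j) = ∑ j ∈ univ.erase i, 2 / (y i - y j)) :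
    z = y := by
  have hle : ∀ j ∈ univ.erase i, 2 / (z i - z j) ≤ 2 / (y i - y j) := fun j hj => by
    refine div_le_div_of_le_of_mul_pos zero_le_two (by linarith [hzy j]) ?_
    rcases (mem_erase.1 hj).1.lt_or_gt with h | h
    · exact mul_pos (sub_pos.2 (hy h)) (sub_pos.2 (hz h))
    · exact mul_pos_of_neg_of_neg (sub_neg.2 (hy h)) (sub_neg.2 (hz h))
  have heq := (Finset.sum_eq_sum_iff_of_le hle).1 hsum
  funext j
  rcases eq_or_ne j i with rfl | hj
  · exact hi
  · have h := congrArg (2 / ·) (heq j (mem_erase.2 ⟨hj, mem_univ j⟩))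
    simp only [div_div_cancel₀ (two_ne_zero' ℝ)] at h
    linarith

end Real

section RealEquilibrium

variable {m n : ℕ} {Q : ℝ[X]} {t : Fin m → ℝ}

lemma nodeWeight_pos (hQ : ∀ s, 0 < Q.eval s) (ht : Function.Injective t) (k : Fin m) :
    0 < nodeWeight Q t k :=
  mul_pos (hQ _) (pow_two_pos_of_ne_zero (nodalWeight_ne_zero ht.injOn (mem_univ k)))

theorem isEquilibrium_of_mem_gap (hn : n = m + 1) (hQ : Q.Monic) (hdeg : Q.natDegree = 2 * m)
    (hQpos : ∀ s, 0 < Q.eval s) (ht : StrictMono t) (htQ : IsEquilibrium Q t) {x : Fin n → ℝ}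
    (hx : ∀ k : Fin n, x k ∈ gap t k) {c : ℝ} (hc : ∀ k, levelFun (nodeWeight Q t) t (x k) = c) :
    IsEquilibrium Q x :=
  isEquilibrium_of_levelFun_eq ht.injective hQ (by rw [hdeg, Fintype.card_fin])
    (fun _ => (hQpos _).ne') htQ (by simp [hn]) (strictMono_of_mem_gap hn.le hx).injective
    (fun _ => (hQpos _).ne') (fun i => ne_of_mem_gap (hx i)) hc

/-- The configuration on the lowest level `S (y i)` lies to the left of `y` and agrees with it at
`i`, so the comparison principle identifies the two. -/
theorem exists_levelFun_eq_of_isEquilibrium (hn : n = m + 1) (hQ : Q.Monic)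
    (hdeg : Q.natDegree = 2 * m) (hQpos : ∀ s, 0 < Q.eval s) (ht : StrictMono t)
    (htQ : IsEquilibrium Q t) {y : Fin n → ℝ} (hy : ∀ k : Fin n, y k ∈ gap t k)
    (hyQ : IsEquilibrium Q y) : ∃ c, ∀ k, levelFun (nodeWeight Q t) t (y k) = c := by
  set S := levelFun (nodeWeight Q t) t
  have hw := nodeWeight_pos hQpos ht.injective
  have hS (k : Fin n) := strictMonoOn_levelFun (fun j => (hw j).le) (t := t) k
  have : Nonempty (Fin n) := ⟨⟨0, by omega⟩⟩
  obtain ⟨i, hi⟩ := Finite.exists_min (S ∘ y)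
  choose z hz hzS using fun k : Fin n => exists_mem_gap_levelFun_eq ht hw (by omega : (k : ℕ) ≤ m)
    (S (y i))
  have hzQ := isEquilibrium_of_mem_gap hn hQ hdeg hQpos ht htQ hz hzS
  have hzi : z i = y i := (hS i).injOn (hz i) (hy i) (hzS i)
  have hzy : z = y := eq_of_le_of_sum_div_sub_eq (strictMono_of_mem_gap hn.le hy)
    (strictMono_of_mem_gap hn.le hz)
    (fun k => ((hS k).le_iff_le (hz k) (hy k)).1 ((hzS k).trans_le (hi k))) hzi
    (by rw [hzQ i, hyQ i, hzi])
  exact ⟨S (y i), fun k => by rw [← congrFun hzy k]; exact hzS k⟩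

end RealEquilibrium

section Complex

/-- The real quadratic `(X - z) * (X - conj z)`. -/
noncomputable def conjPairPoly (z : ℂ) : ℝ[X] := (X - C z.re) ^ 2 + C (z.im ^ 2)

lemma conjPairPoly_monic (z : ℂ) : (conjPairPoly z).Monic :=
  ((monic_X_sub_C _).pow 2).add_of_left (degree_C_le.trans_lt (by
    rw [degree_pow, degree_X_sub_C]; decide))

lemma natDegree_conjPairPoly (z : ℂ) : (conjPairPoly z).natDegree = 2 := by
  rw [conjPairPoly, natDegree_add_C, natDegree_pow, natDegree_X_sub_C]

lemma eval_conjPairPoly_pos {z : ℂ} (hz : z.im ≠ 0) (s : ℝ) : 0 < (conjPairPoly z).eval s := by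
  simp only [conjPairPoly, eval_add, eval_pow, eval_sub, eval_X, eval_C]
  positivity

lemma ofReal_eval_derivative_div_eval_conjPairPoly (z : ℂ) (s : ℝ) :
    (((derivative (conjPairPoly z)).eval s / (conjPairPoly z).eval s : ℝ) : ℂ)
      = 1 / ((s : ℂ) - z) + 1 / ((s : ℂ) - conj z) := by
  have hconj : (s : ℂ) - conj z = conj ((s : ℂ) - z) := by simp
  rw [hconj, one_div, one_div, ← map_inv₀, Complex.add_conj, Complex.inv_re, Complex.normSq_apply,
    conjPairPoly, derivative_add, derivative_C, add_zero, derivative_sq, derivative_X_sub_C]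
  simp
  ring

variable {m : ℕ} {ζ : Fin m → ℂ}

lemma prod_conjPairPoly_monic (ζ : Fin m → ℂ) : (∏ j, conjPairPoly (ζ j)).Monic :=
  monic_prod_of_monic _ _ fun j _ => conjPairPoly_monic (ζ j)

lemma natDegree_prod_conjPairPoly (ζ : Fin m → ℂ) :
    (∏ j, conjPairPoly (ζ j)).natDegree = 2 * m := by
  rw [natDegree_prod_of_monic _ _ fun j _ => conjPairPoly_monic (ζ j)]
  simp [natDegree_conjPairPoly, mul_comm]

lemma eval_prod_conjPairPoly_pos (hζ : ∀ j, (ζ j).im ≠ 0) (s : ℝ) :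
    0 < (∏ j, conjPairPoly (ζ j)).eval s := by
  rw [eval_prod]
  exact Finset.prod_pos fun j _ => eval_conjPairPoly_pos (hζ j) s

lemma sum_sub_sum_eq_zero_iff (hζ : ∀ j, (ζ j).im ≠ 0) {ι : Type*} (s : Finset ι) (u : ℝ)
    (v : ι → ℝ) :
    (∑ j ∈ s, 2 / ((u : ℂ) - (v j : ℂ)))
        - ∑ j, (1 / ((u : ℂ) - ζ j) + 1 / ((u : ℂ) - conj (ζ j))) = 0
      ↔ ∑ j ∈ s, 2 / (u - v j)
        = (derivative (∏ j, conjPairPoly (ζ j))).eval u / (∏ j, conjPairPoly (ζ j)).eval u := by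
  have hne : ∀ j ∈ (univ : Finset (Fin m)), (conjPairPoly (ζ j)).eval u ≠ 0 :=
    fun j _ => (eval_conjPairPoly_pos (hζ j) u).ne'
  rw [eval_derivative_prod hne, mul_div_cancel_left₀ _ (eval_prod_conjPairPoly_pos hζ u).ne',
    sub_eq_zero]
  simp_rw [← ofReal_eval_derivative_div_eval_conjPairPoly]
  norm_cast

end Complex

end Equilibrium

open Equilibrium

theorem equilibrium_n_points_unique_given_one_general
    (n : ℕ) (ζ : Fin (n - 1) → ℂ) (hζ : ∀ j, 0 < (ζ j).im)
    (t : Fin (n - 1) → ℝ) (ht : StrictMono t)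
    (ht17 : ∀ k : Fin (n - 1),
      (∑ j ∈ Finset.univ.erase k, 2 / ((t k : ℂ) - (t j : ℂ)))
        - ∑ j, (1 / ((t k : ℂ) - ζ j) + 1 / ((t k : ℂ) - conj (ζ j))) = 0)
    (k₀ : Fin n) (x₀ : ℝ)
    (hx₀ : ∀ j : Fin (n - 1),
      ((j : ℕ) < (k₀ : ℕ) → t j < x₀) ∧ ((k₀ : ℕ) ≤ (j : ℕ) → x₀ < t j)) :
    ∃! x : Fin n → ℝ,
      x k₀ = x₀ ∧ StrictMono x ∧
      (∀ k : Fin n, ∀ j : Fin (n - 1),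
        ((j : ℕ) < (k : ℕ) → t j < x k) ∧ ((k : ℕ) ≤ (j : ℕ) → x k < t j)) ∧
      (∀ k : Fin n,
        (∑ j ∈ Finset.univ.erase k, 2 / ((x k : ℂ) - (x j : ℂ)))
          - ∑ j, (1 / ((x k : ℂ) - ζ j) + 1 / ((x k : ℂ) - conj (ζ j))) = 0) := by
  have hn : n = n - 1 + 1 := by have := k₀.pos; omega
  have hζ' : ∀ j, (ζ j).im ≠ 0 := fun j => (hζ j).ne'
  set Q := ∏ j, conjPairPoly (ζ j)
  have hQ := prod_conjPairPoly_monic ζ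
  have hdeg := natDegree_prod_conjPairPoly ζ
  have hQpos := eval_prod_conjPairPoly_pos hζ'
  have htQ : IsEquilibrium Q t := fun k => (sum_sub_sum_eq_zero_iff hζ' _ _ _).1 (ht17 k)
  set S := levelFun (nodeWeight Q t) t
  have hS (k : Fin n) := strictMonoOn_levelFun (fun j => (nodeWeight_pos hQpos ht.injective j).le)
    (t := t) k
  choose x hx hxS using fun k : Fin n => exists_mem_gap_levelFun_eq ht
    (nodeWeight_pos hQpos ht.injective) (by omega : (k : ℕ) ≤ n - 1) (S x₀)
  refine ⟨x, ⟨(hS k₀).injOn (hx k₀) hx₀ (hxS k₀), strictMono_of_mem_gap hn.le hx, hx,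
    fun k => (sum_sub_sum_eq_zero_iff hζ' _ _ _).2
      (isEquilibrium_of_mem_gap hn hQ hdeg hQpos ht htQ hx hxS k)⟩, ?_⟩
  rintro y ⟨hy₀, -, hy, hyQ⟩
  obtain ⟨c, hc⟩ := exists_levelFun_eq_of_isEquilibrium hn hQ hdeg hQpos ht htQ hy
    fun k => (sum_sub_sum_eq_zero_iff hζ' _ _ _).1 (hyQ k)
  funext k
  exact (hS k).injOn (hy k) (hx k) (by rw [hc, hxS, ← hc k₀, hy₀])

/-- **Theorem 2 (ii).** Let `t 1 < … < t (n-1)` be the unique ordered solution of the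
equilibrium equations (17) (with `t 0 = -∞`, `t n = +∞`). Fix `k₀` and a point
`x₀ ∈ (t (k₀-1), t k₀)`. Then there are unique points `x k ∈ (t (k-1), t k)` for the
remaining indices such that `x 1 < … < x n` satisfy the equilibrium equations (10). -/
theorem equilibrium_n_points_unique_given_one
    (n : ℕ) (hn : 2 ≤ n) (ζ : Fin (n - 1) → ℂ) (hζ : ∀ j, 0 < (ζ j).im)
    (t : Fin (n - 1) → ℝ) (ht : StrictMono t)
    (ht17 : ∀ k : Fin (n - 1),
      (∑ j ∈ Finset.univ.erase k, 2 / ((t k : ℂ) - (t j : ℂ)))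
        - ∑ j, (1 / ((t k : ℂ) - ζ j) + 1 / ((t k : ℂ) - conj (ζ j))) = 0)
    (k₀ : Fin n) (x₀ : ℝ)
    (hx₀ : ∀ j : Fin (n - 1),
      ((j : ℕ) < (k₀ : ℕ) → t j < x₀) ∧ ((k₀ : ℕ) ≤ (j : ℕ) → x₀ < t j)) :
    ∃! x : Fin n → ℝ,
      x k₀ = x₀ ∧ StrictMono x ∧
      (∀ k : Fin n, ∀ j : Fin (n - 1),
        ((j : ℕ) < (k : ℕ) → t j < x k) ∧ ((k : ℕ) ≤ (j : ℕ) → x k < t j)) ∧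
      (∀ k : Fin n,
        (∑ j ∈ Finset.univ.erase k, 2 / ((x k : ℂ) - (x j : ℂ)))
          - ∑ j, (1 / ((x k : ℂ) - ζ j) + 1 / ((x k : ℂ) - conj (ζ j))) = 0) :=
  equilibrium_n_points_unique_given_one_general n ζ hζ t ht ht17 k₀ x₀ hx₀
end

section
/- Let n ≥ 2, let ζ_1, …, ζ_{n-1} ∈ ℍ, and let P(x) = ∏_{j=1}^{n-1} (x - ζ_j)(x - conj(ζ_j)). Suppose t_1 < t_2 < … < t_{n-1} satisfy the equilibrium equations (17) and x_1 < x_2 < … < x_n satisfy the equilibrium equations (10); set Q(x) = ∏_{k=1}^n (x - x_k) and S(x) = ∏_{k=1}^{n-1} (x - t_k). If R and R̃ are real polynomials such that P·Q'' - P'·Q' + R·Q = 0 and P·S'' - P'·S' + R̃·S = 0, then R = R̃. -/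
open Polynomial Finset Complex ComplexConjugate

/-!
At a node `a` of `Q`, the equation `P Q'' - P' Q' + R Q = 0` reads `P(a) Q''(a) = P'(a) Q'(a)`,
which says that `P` and `P(a) ℓ²` agree to first order at `a`, `ℓ` being the Lagrange basis
polynomial of `a`. Comparing degrees gives `P = ∑ P(x k) ℓ_k²` at the nodes of `Q` and
`P = S² + ∑ P(t j) m_j²` at the nodes of `S`. As `P > 0`, the first identity and Cauchy–Schwarz
give `T(y)² ≤ P(y) ∑ T(x k)² / P(x k)` whenever `deg T < n`; applied to `T = m_j`, `y = t j`
and summed with the second identity this yields `∑ S(x k)² / P(x k) ≤ 1`. Comparing leading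
coefficients, the weights `w k = 1 / Q'(x k)` satisfy `∑ S(x k) w k = 1 = ∑ P(x k) (w k)²`,
so we are in the equality case of Cauchy–Schwarz: `S(x k) = P(x k) w k`. Hence the Wronskian
`W = Q' S - Q S'` is `P`, and then `Q S (R' - R) = P W' - P' W = 0`.
-/

namespace Polynomial

variable {R : Type*} [CommRing R]

theorem X_sub_C_sq_dvd_of_isRoot_of_isRoot_derivative {p : R[X]} {a : R} (h₀ : p.IsRoot a)
    (h₁ : (derivative p).IsRoot a) : (X - C a) ^ 2 ∣ p := by
  rcases eq_or_ne p 0 with rfl | hp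
  · exact dvd_zero _
  exact (le_rootMultiplicity_iff hp).1 ((one_lt_rootMultiplicity_iff_isRoot hp).2 ⟨h₀, h₁⟩)

theorem eval_mul_eval_derivative_derivative_eq_of_isRoot {P Q A : R[X]} {a : R}
    (h : P * derivative (derivative Q) - derivative P * derivative Q + A * Q = 0)
    (ha : Q.IsRoot a) :
    P.eval a * (derivative (derivative Q)).eval a
      = (derivative P).eval a * (derivative Q).eval a := by
  have := congrArg (eval a) h
  simp only [eval_add, eval_sub, eval_mul, ha.eq_zero, mul_zero, add_zero, eval_zero] at this
  exact sub_eq_zero.1 this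

theorem eq_of_derivative_mul_sub_mul_derivative_eq [IsDomain R] {P Q S A B : R[X]}
    (hQ : Q ≠ 0) (hS : S ≠ 0)
    (hA : P * derivative (derivative Q) - derivative P * derivative Q + A * Q = 0)
    (hB : P * derivative (derivative S) - derivative P * derivative S + B * S = 0)
    (hW : derivative Q * S - Q * derivative S = P) : A = B := by
  have hW' : derivative (derivative Q) * S - Q * derivative (derivative S) = derivative P := by
    rw [← hW, derivative_sub, derivative_mul, derivative_mul]
    ring
  have : Q * S * (B - A) = 0 := by
    linear_combination Q * hB - S * hA + P * hW' - derivative P * hW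
  simpa [hQ, hS, sub_eq_zero, eq_comm] using this

end Polynomial

namespace Lagrange

section Field

variable {F : Type*} [Field F] {ι : Type*} [DecidableEq ι] {s : Finset ι} {v : ι → F} {i : ι}

theorem basis_eq_C_nodalWeight_mul_nodal_erase (hi : i ∈ s) :
    Lagrange.basis s v i = C (nodalWeight s v i) * nodal (s.erase i) v := by
  rw [basis_eq_prod_sub_inv_mul_nodal_div hi, nodal_erase_eq_nodal_div hi]

theorem nodalWeight_mul_eval_nodal_erase (hvs : Set.InjOn v s) (hi : i ∈ s) :
    nodalWeight s v i * (nodal (s.erase i) v).eval (v i) = 1 := by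
  have hw := nodalWeight_ne_zero hvs hi
  rw [nodalWeight_eq_eval_nodal_erase_inv] at hw ⊢
  exact inv_mul_cancel₀ (by simpa using hw)

theorem eval_derivative_derivative_nodal_eval_node_eq (hi : i ∈ s) :
    (derivative (derivative (nodal s v))).eval (v i)
      = 2 * (derivative (nodal (s.erase i) v)).eval (v i) := by
  rw [nodal_eq_mul_nodal_erase hi]
  simp only [derivative_mul, derivative_add, derivative_sub, derivative_X, derivative_C,
    derivative_one, derivative_zero, eval_add, eval_mul, eval_sub, eval_X, eval_C, eval_one,
    eval_zero]
  ring

theorem derivative_nodal_mul_basis_sub_nodal_mul_derivative_basis (hi : i ∈ s) :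
    derivative (nodal s v) * Lagrange.basis s v i - nodal s v * derivative (Lagrange.basis s v i)
      = C (nodalWeight s v i) * nodal (s.erase i) v ^ 2 := by
  rw [basis_eq_C_nodalWeight_mul_nodal_erase hi, nodal_eq_mul_nodal_erase hi]
  simp only [derivative_mul, derivative_sub, derivative_X, derivative_C]
  ring

theorem X_sub_C_sq_dvd_sub_C_eval_mul_basis_sq (hvs : Set.InjOn v s) (hi : i ∈ s) {P : F[X]}
    (hP : P.eval (v i) * (derivative (derivative (nodal s v))).eval (v i)
      = (derivative P).eval (v i) * (derivative (nodal s v)).eval (v i)) :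
    (X - C (v i)) ^ 2 ∣ P - C (P.eval (v i)) * Lagrange.basis s v i ^ 2 := by
  have hw := nodalWeight_mul_eval_nodal_erase hvs hi
  rw [eval_derivative_derivative_nodal_eval_node_eq hi,
    eval_nodal_derivative_eval_node_eq hi] at hP
  rw [basis_eq_C_nodalWeight_mul_nodal_erase hi]
  set w := nodalWeight s v i
  set N := nodal (s.erase i) v
  apply X_sub_C_sq_dvd_of_isRoot_of_isRoot_derivative
  · simp only [IsRoot, eval_sub, eval_mul, eval_C, eval_pow]
    linear_combination -P.eval (v i) * (w * N.eval (v i) + 1) * hw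
  · simp only [IsRoot, derivative_sub, derivative_mul, derivative_C, derivative_pow, zero_mul,
      zero_add, eval_sub, eval_mul, eval_C, eval_pow]
    linear_combination -(derivative P).eval (v i) * (1 + w * N.eval (v i)) * hw
      - w ^ 2 * N.eval (v i) * hP

theorem nodal_sq_dvd_sub_sum_C_eval_mul_basis_sq (hvs : Set.InjOn v s) {P : F[X]}
    (hP : ∀ i ∈ s, P.eval (v i) * (derivative (derivative (nodal s v))).eval (v i)
      = (derivative P).eval (v i) * (derivative (nodal s v)).eval (v i)) :
    nodal s v ^ 2 ∣ P - ∑ j ∈ s, C (P.eval (v j)) * Lagrange.basis s v j ^ 2 := by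
  rw [nodal, ← prod_pow]
  refine Finset.prod_dvd_of_coprime (fun i hi j hj hij => ?_) (fun i hi => ?_)
  · exact (isCoprime_X_sub_C_of_isUnit_sub (sub_ne_zero.2 (hvs.ne hi hj hij)).isUnit).pow
  rw [← add_sum_erase _ _ hi, ← sub_sub]
  refine dvd_sub (X_sub_C_sq_dvd_sub_C_eval_mul_basis_sq hvs hi (hP i hi))
    (dvd_sum fun j hj => Dvd.dvd.mul_left (pow_dvd_pow_of_dvd ?_ 2) _)
  exact dvd_iff_isRoot.2 (eval_basis_of_ne (mem_erase.1 hj).1 hi)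

theorem degree_sum_C_mul_basis_sq_lt (hvs : Set.InjOn v s) (r : ι → F) :
    (∑ j ∈ s, C (r j) * Lagrange.basis s v j ^ 2).degree < ↑(2 * #s) := by
  refine (degree_sum_le _ _).trans_lt ((Finset.sup_lt_iff (WithBot.bot_lt_coe _)).2 fun j hj => ?_)
  rw [← smul_eq_C_mul]
  refine (degree_smul_le _ _).trans_lt ?_
  rw [degree_pow, degree_basis hvs hj, nsmul_eq_mul, ← Nat.cast_ofNat, ← Nat.cast_mul,
    Nat.cast_lt]
  have := card_pos.2 ⟨j, hj⟩
  omega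

theorem eq_sum_C_eval_mul_basis_sq (hvs : Set.InjOn v s) {P : F[X]}
    (hP : ∀ i ∈ s, P.eval (v i) * (derivative (derivative (nodal s v))).eval (v i)
      = (derivative P).eval (v i) * (derivative (nodal s v)).eval (v i))
    (hdeg : P.degree < ↑(2 * #s)) :
    P = ∑ j ∈ s, C (P.eval (v j)) * Lagrange.basis s v j ^ 2 := by
  refine sub_eq_zero.1 (eq_zero_of_dvd_of_degree_lt
    (nodal_sq_dvd_sub_sum_C_eval_mul_basis_sq hvs hP) ?_)
  rw [degree_pow, degree_nodal]
  exact (degree_sub_le _ _).trans_lt (max_lt (by simpa [mul_comm] using hdeg)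
    (by simpa [mul_comm] using degree_sum_C_mul_basis_sq_lt hvs _))

theorem eq_nodal_sq_add_sum_C_eval_mul_basis_sq (hvs : Set.InjOn v s) {P : F[X]}
    (hP : ∀ i ∈ s, P.eval (v i) * (derivative (derivative (nodal s v))).eval (v i)
      = (derivative P).eval (v i) * (derivative (nodal s v)).eval (v i))
    (hmonic : P.Monic) (hdeg : P.natDegree = 2 * #s) :
    P = nodal s v ^ 2 + ∑ j ∈ s, C (P.eval (v j)) * Lagrange.basis s v j ^ 2 := by
  have hlt : (∑ j ∈ s, C (P.eval (v j)) * Lagrange.basis s v j ^ 2).degree < P.degree := by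
    rw [degree_eq_natDegree hmonic.ne_zero, hdeg]
    exact degree_sum_C_mul_basis_sq_lt hvs _
  rw [← sub_eq_iff_eq_add]
  refine eq_of_monic_of_dvd_of_natDegree_le (nodal_monic.pow 2) (hmonic.sub_of_left hlt)
    (nodal_sq_dvd_sub_sum_C_eval_mul_basis_sq hvs hP) ?_
  rw [natDegree_eq_of_degree_eq (degree_sub_eq_left_of_degree_lt hlt), hdeg, natDegree_pow,
    natDegree_nodal, mul_comm]

theorem coeff_basis_sq (hi : i ∈ s) :
    (Lagrange.basis s v i ^ 2).coeff (2 * (#s - 1)) = nodalWeight s v i ^ 2 := by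
  have hN : (nodal (s.erase i) v ^ 2).natDegree = 2 * (#s - 1) := by
    rw [nodal_monic.natDegree_pow, natDegree_nodal, card_erase_of_mem hi]
  rw [basis_eq_C_nodalWeight_mul_nodal_erase hi, mul_pow, ← C_pow, coeff_C_mul, ← hN,
    (nodal_monic.pow 2).coeff_natDegree, mul_one]

theorem derivative_nodal_mul_sub_nodal_mul_derivative_eq (hvs : Set.InjOn v s) {P S : F[X]}
    (hP : P = ∑ j ∈ s, C (P.eval (v j)) * Lagrange.basis s v j ^ 2) (hS : S.degree < #s)
    (hSP : ∀ i ∈ s, S.eval (v i) = P.eval (v i) * nodalWeight s v i) :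
    derivative (nodal s v) * S - nodal s v * derivative S = P := by
  rw [eq_interpolate hvs hS, interpolate_apply, derivative_sum, mul_sum, mul_sum,
    ← sum_sub_distrib]
  conv_rhs => rw [hP]
  refine sum_congr rfl fun i hi => ?_
  have hW := derivative_nodal_mul_basis_sub_nodal_mul_derivative_basis (v := v) hi
  have hℓ := basis_eq_C_nodalWeight_mul_nodal_erase (v := v) hi
  rw [derivative_mul, derivative_C, zero_mul, zero_add, hSP i hi, C_mul]
  linear_combination C (P.eval (v i)) * C (nodalWeight s v i) * hW
    - C (P.eval (v i)) * (Lagrange.basis s v i + C (nodalWeight s v i) * nodal (s.erase i) v) * hℓ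

end Field

section Real

variable {ι : Type*} [DecidableEq ι] {s : Finset ι} {x : ι → ℝ}

theorem sq_eval_le_sum_sq_div_mul_eval (hx : Set.InjOn x s) {P : ℝ[X]}
    (hP : P = ∑ j ∈ s, C (P.eval (x j)) * Lagrange.basis s x j ^ 2)
    (hpos : ∀ i ∈ s, 0 < P.eval (x i)) {T : ℝ[X]} (hT : T.degree < #s) (y : ℝ) :
    T.eval y ^ 2 ≤ (∑ i ∈ s, T.eval (x i) ^ 2 / P.eval (x i)) * P.eval y := by
  have hTy : T.eval y = ∑ i ∈ s, T.eval (x i) * (Lagrange.basis s x i).eval y := by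
    conv_lhs => rw [eq_interpolate hx hT]
    simp only [interpolate_apply, eval_finsetSum, eval_mul, eval_C]
  have hPy : P.eval y = ∑ i ∈ s, P.eval (x i) * (Lagrange.basis s x i).eval y ^ 2 := by
    conv_lhs => rw [hP]
    simp only [eval_finsetSum, eval_mul, eval_C, eval_pow]
  rw [hTy, hPy]
  refine sum_sq_le_sum_mul_sum_of_sq_le_mul _ (fun i hi => div_nonneg (sq_nonneg _) (hpos i hi).le)
    (fun i hi => mul_nonneg (hpos i hi).le (sq_nonneg _)) (fun i hi => le_of_eq ?_)
  field_simp [(hpos i hi).ne']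

theorem sum_eval_nodal_sq_div_le_one {κ : Type*} [DecidableEq κ] {u : Finset κ} {t : κ → ℝ}
    (hx : Set.InjOn x s) (ht : Set.InjOn t u) (hcard : #u + 1 = #s) {P : ℝ[X]}
    (hpos : ∀ i ∈ s, 0 < P.eval (x i))
    (hPx : P = ∑ i ∈ s, C (P.eval (x i)) * Lagrange.basis s x i ^ 2)
    (hPt : P = nodal u t ^ 2 + ∑ j ∈ u, C (P.eval (t j)) * Lagrange.basis u t j ^ 2) :
    ∑ i ∈ s, (nodal u t).eval (x i) ^ 2 / P.eval (x i) ≤ 1 := by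
  have key : ∀ j ∈ u,
      1 ≤ P.eval (t j) * ∑ i ∈ s, (Lagrange.basis u t j).eval (x i) ^ 2 / P.eval (x i) := by
    intro j hj
    have hdeg : (Lagrange.basis u t j).degree < #s := by
      rw [degree_basis ht hj]
      exact_mod_cast (by omega : #u - 1 < #s)
    have := sq_eval_le_sum_sq_div_mul_eval hx hPx hpos hdeg (t j)
    rwa [eval_basis_self ht hj, one_pow, mul_comm] at this
  have hPt_eval : ∀ i ∈ s, P.eval (x i) - (nodal u t).eval (x i) ^ 2
      = ∑ j ∈ u, P.eval (t j) * (Lagrange.basis u t j).eval (x i) ^ 2 := by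
    intro i _
    conv_lhs => rw [hPt]
    simp only [eval_add, eval_pow, eval_finsetSum, eval_mul, eval_C, add_sub_cancel_left]
  calc ∑ i ∈ s, (nodal u t).eval (x i) ^ 2 / P.eval (x i)
      = #s - ∑ i ∈ s, (P.eval (x i) - (nodal u t).eval (x i) ^ 2) / P.eval (x i) := by
        simp only [sub_div, sum_sub_distrib]
        rw [sum_congr rfl fun i hi => div_self (hpos i hi).ne', sum_const, nsmul_one]
        ring
    _ = #s - ∑ j ∈ u,
          P.eval (t j) * ∑ i ∈ s, (Lagrange.basis u t j).eval (x i) ^ 2 / P.eval (x i) := by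
        rw [sum_congr rfl fun i hi => by rw [hPt_eval i hi, sum_div], sum_comm]
        simp only [mul_sum, mul_div_assoc]
    _ ≤ #s - #u := by
        gcongr
        simpa using sum_le_sum key
    _ = 1 := by
        rw [← hcard]
        push_cast
        ring

theorem eval_eq_eval_mul_nodalWeight_of_sum_sq_div_le_one (hx : Set.InjOn x s) {P S : ℝ[X]}
    (hP : P = ∑ i ∈ s, C (P.eval (x i)) * Lagrange.basis s x i ^ 2)
    (hpos : ∀ i ∈ s, 0 < P.eval (x i)) (hP1 : P.coeff (2 * (#s - 1)) = 1)
    (hS : S.degree < #s) (hS1 : S.coeff (#s - 1) = 1)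
    (hle : ∑ i ∈ s, S.eval (x i) ^ 2 / P.eval (x i) ≤ 1) :
    ∀ i ∈ s, S.eval (x i) = P.eval (x i) * nodalWeight s x i := by
  have hSw : ∑ i ∈ s, S.eval (x i) * nodalWeight s x i = 1 := by
    rw [← hS1, coeff_eq_sum hx hS]
    simp only [nodalWeight, prod_inv_distrib, div_eq_mul_inv]
  have hPw : ∑ i ∈ s, P.eval (x i) * nodalWeight s x i ^ 2 = 1 := by
    rw [← hP1]
    conv_rhs => rw [hP]
    simp only [finsetSum_coeff, coeff_C_mul]
    exact sum_congr rfl fun i hi => by rw [coeff_basis_sq hi]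
  have hterm : ∀ i ∈ s, (S.eval (x i) - P.eval (x i) * nodalWeight s x i) ^ 2 / P.eval (x i)
      = S.eval (x i) ^ 2 / P.eval (x i) - 2 * (S.eval (x i) * nodalWeight s x i)
        + P.eval (x i) * nodalWeight s x i ^ 2 := by
    intro i hi
    field_simp [(hpos i hi).ne']
    ring
  have hnonneg : ∀ i ∈ s,
      0 ≤ (S.eval (x i) - P.eval (x i) * nodalWeight s x i) ^ 2 / P.eval (x i) :=
    fun i hi => div_nonneg (sq_nonneg _) (hpos i hi).le
  have hzero : ∑ i ∈ s, (S.eval (x i) - P.eval (x i) * nodalWeight s x i) ^ 2 / P.eval (x i)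
      = 0 := by
    refine le_antisymm ?_ (sum_nonneg hnonneg)
    rw [sum_congr rfl hterm, sum_add_distrib, sum_sub_distrib, ← mul_sum, hSw, hPw]
    linarith
  intro i hi
  have := (sum_eq_zero_iff_of_nonneg hnonneg).1 hzero i hi
  rwa [div_eq_zero_iff, or_iff_left (hpos i hi).ne', sq_eq_zero_iff, sub_eq_zero] at this

theorem derivative_nodal_mul_nodal_sub_nodal_mul_derivative_nodal_eq {κ : Type*}
    [DecidableEq κ] {u : Finset κ} {t : κ → ℝ} (hx : Set.InjOn x s) (ht : Set.InjOn t u)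
    (hcard : #u + 1 = #s) {P : ℝ[X]} (hmonic : P.Monic) (hdeg : P.natDegree = 2 * #u)
    (hpos : ∀ i ∈ s, 0 < P.eval (x i))
    (hPx : ∀ i ∈ s, P.eval (x i) * (derivative (derivative (nodal s x))).eval (x i)
      = (derivative P).eval (x i) * (derivative (nodal s x)).eval (x i))
    (hPt : ∀ j ∈ u, P.eval (t j) * (derivative (derivative (nodal u t))).eval (t j)
      = (derivative P).eval (t j) * (derivative (nodal u t)).eval (t j)) :
    derivative (nodal s x) * nodal u t - nodal s x * derivative (nodal u t) = P := by
  have hIx := eq_sum_C_eval_mul_basis_sq hx hPx (by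
    rw [degree_eq_natDegree hmonic.ne_zero, hdeg]
    exact_mod_cast (by omega : 2 * #u < 2 * #s))
  have hIt := eq_nodal_sq_add_sum_C_eval_mul_basis_sq ht hPt hmonic hdeg
  have hS : (nodal u t).degree < #s := by
    rw [degree_nodal]
    exact_mod_cast (by omega : #u < #s)
  have hP1 : P.coeff (2 * (#s - 1)) = 1 := by
    rw [← hcard, Nat.add_sub_cancel, ← hdeg, hmonic.coeff_natDegree]
  have hS1 : (nodal u t).coeff (#s - 1) = 1 := by
    rw [← hcard, Nat.add_sub_cancel, ← natDegree_nodal (v := t), nodal_monic.coeff_natDegree]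
  exact derivative_nodal_mul_sub_nodal_mul_derivative_eq hx hIx hS
    (eval_eq_eval_mul_nodalWeight_of_sum_sq_div_le_one hx hIx hpos hP1 hS hS1
      (sum_eval_nodal_sq_div_le_one hx ht hcard hpos hIx hIt))

end Real

end Lagrange

section ConjugatePairs

variable {κ : Type*} [Fintype κ] {P : ℝ[X]}

theorem monic_of_map_eq_prod_mul {a b : κ → ℂ}
    (hP : P.map (algebraMap ℝ ℂ) = ∏ j, (X - C (a j)) * (X - C (b j))) : P.Monic := by
  rw [← monic_map_iff (f := algebraMap ℝ ℂ), hP]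
  exact monic_prod_of_monic _ _ fun j _ => (monic_X_sub_C _).mul (monic_X_sub_C _)

theorem natDegree_of_map_eq_prod_mul {a b : κ → ℂ}
    (hP : P.map (algebraMap ℝ ℂ) = ∏ j, (X - C (a j)) * (X - C (b j))) :
    P.natDegree = 2 * Fintype.card κ := by
  rw [← natDegree_map_eq_of_injective (algebraMap ℝ ℂ).injective, hP, prod_mul_distrib,
    (monic_prod_of_monic _ _ fun j _ => monic_X_sub_C _).natDegree_mul
      (monic_prod_of_monic _ _ fun j _ => monic_X_sub_C _),
    natDegree_finsetProd_X_sub_C_eq_card, natDegree_finsetProd_X_sub_C_eq_card, card_univ]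
  ring

theorem eval_pos_of_map_eq_prod_mul_conj {ζ : κ → ℂ} (hζ : ∀ j, (ζ j).im ≠ 0)
    (hP : P.map (algebraMap ℝ ℂ) = ∏ j, (X - C (ζ j)) * (X - C (conj (ζ j)))) (y : ℝ) :
    0 < P.eval y := by
  have h : ((P.eval y : ℝ) : ℂ) = ((∏ j, normSq ((y : ℂ) - ζ j) : ℝ) : ℂ) := by
    change algebraMap ℝ ℂ (P.eval y) = _
    rw [← eval_map_apply, hP, ofReal_prod, eval_prod]
    refine prod_congr rfl fun j _ => ?_
    rw [← mul_conj]
    simp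
  rw [ofReal_inj.1 h]
  refine prod_pos fun j _ => normSq_pos.2 fun h0 => hζ j ?_
  simpa using congrArg im h0

end ConjugatePairs

theorem van_vleck_polynomials_coincide_general
    (n : ℕ) (hn : 2 ≤ n) (ζ : Fin (n - 1) → ℂ) (hζ : ∀ j, 0 < (ζ j).im)
    (P : Polynomial ℝ)
    (hP : P.map (algebraMap ℝ ℂ) = ∏ j, (X - C (ζ j)) * (X - C (conj (ζ j))))
    (t : Fin (n - 1) → ℝ) (ht : StrictMono t)
    (x : Fin n → ℝ) (hx : StrictMono x)
    (Q : Polynomial ℝ) (hQ : Q = ∏ k, (X - C (x k)))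
    (S : Polynomial ℝ) (hS : S = ∏ k, (X - C (t k)))
    (R R' : Polynomial ℝ)
    (hR : P * derivative (derivative Q) - derivative P * derivative Q + R * Q = 0)
    (hR' : P * derivative (derivative S) - derivative P * derivative S + R' * S = 0) :
    R = R' := by
  rw [← Lagrange.nodal_eq] at hQ hS
  subst hQ hS
  refine eq_of_derivative_mul_sub_mul_derivative_eq Lagrange.nodal_ne_zero
    Lagrange.nodal_ne_zero hR hR' ?_
  refine Lagrange.derivative_nodal_mul_nodal_sub_nodal_mul_derivative_nodal_eq
    hx.injective.injOn ht.injective.injOn (by simp only [card_univ, Fintype.card_fin]; omega)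
    (monic_of_map_eq_prod_mul hP) (by rw [natDegree_of_map_eq_prod_mul hP, card_univ])
    (fun i _ => eval_pos_of_map_eq_prod_mul_conj (fun j => (hζ j).ne') hP _)
    (fun i hi => eval_mul_eval_derivative_derivative_eq_of_isRoot hR
      (Lagrange.eval_nodal_at_node hi))
    (fun j hj => eval_mul_eval_derivative_derivative_eq_of_isRoot hR'
      (Lagrange.eval_nodal_at_node hj))

/-- **Lemma 9.** Let `t 1 < … < t (n-1)` satisfy the equilibrium equations (17) and let
`x 1 < … < x n` satisfy the equilibrium equations (10). Then the Van Vleck polynomials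
`R` and `R̃` corresponding to the Stieltjes polynomials `Q(x) = ∏ (x - x k)` and
`S(x) = ∏ (x - t k)` of the equations `P·Q'' - P'·Q' + R·Q = 0` and
`P·S'' - P'·S' + R̃·S = 0` coincide. -/
theorem van_vleck_polynomials_coincide
    (n : ℕ) (hn : 2 ≤ n) (ζ : Fin (n - 1) → ℂ) (hζ : ∀ j, 0 < (ζ j).im)
    (P : Polynomial ℝ)
    (hP : P.map (algebraMap ℝ ℂ) = ∏ j, (X - C (ζ j)) * (X - C (conj (ζ j))))
    (t : Fin (n - 1) → ℝ) (ht : StrictMono t)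
    (ht17 : ∀ k : Fin (n - 1),
      (∑ j ∈ Finset.univ.erase k, 2 / ((t k : ℂ) - (t j : ℂ)))
        - ∑ j, (1 / ((t k : ℂ) - ζ j) + 1 / ((t k : ℂ) - conj (ζ j))) = 0)
    (x : Fin n → ℝ) (hx : StrictMono x)
    (hx10 : ∀ k : Fin n,
      (∑ j ∈ Finset.univ.erase k, 2 / ((x k : ℂ) - (x j : ℂ)))
        - ∑ j, (1 / ((x k : ℂ) - ζ j) + 1 / ((x k : ℂ) - conj (ζ j))) = 0)
    (Q : Polynomial ℝ) (hQ : Q = ∏ k, (X - C (x k)))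
    (S : Polynomial ℝ) (hS : S = ∏ k, (X - C (t k)))
    (R R' : Polynomial ℝ)
    (hR : P * derivative (derivative Q) - derivative P * derivative Q + R * Q = 0)
    (hR' : P * derivative (derivative S) - derivative P * derivative S + R' * S = 0) :
    R = R' :=
  van_vleck_polynomials_coincide_general n hn ζ hζ P hP t ht x hx Q hQ S hS R R' hR hR'
end

section
/- Let n ≥ 2, let P be a monic real polynomial of degree 2n-2 with P(x) > 0 for all x ∈ ℝ, and let R be a real polynomial. Suppose Q and S are monic real polynomial solutions, of degrees n and n-1 respectively, of the Lamé equation P·Y'' - P'·Y' + R·Y = 0. Then P = S·Q' - S'·Q and R = S'·Q'' - S''·Q'. -/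
open Polynomial

private lemma natDeg_deriv {p : Polynomial ℝ} (hp : 0 < p.natDegree) :
    (derivative p).natDegree = p.natDegree - 1 :=
  natDegree_eq_of_degree_eq_some (degree_derivative_eq p hp)

private lemma lead_deriv {p : Polynomial ℝ} (hp : 0 < p.natDegree) :
    (derivative p).leadingCoeff = p.natDegree * p.leadingCoeff := by
  rw [leadingCoeff, natDeg_deriv hp, coeff_derivative, leadingCoeff]
  have : p.natDegree - 1 + 1 = p.natDegree := Nat.succ_pred_eq_of_pos hp
  rw [this]
  push_cast [Nat.cast_sub (Nat.one_le_iff_ne_zero.mpr hp.ne')]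
  ring

/-- **Lemma 10.** If `Q` and `S` are monic polynomial solutions of degrees `n` and
`n-1`, respectively, of the Lamé equation `P·Y'' - P'·Y' + R·Y = 0`, where `P` is a
monic real polynomial of degree `2n-2` positive on `ℝ`, then `P = S·Q' - S'·Q` and
`R = S'·Q'' - S''·Q'`. -/
theorem wronskian_of_stieltjes_solutions
    (n : ℕ) (hn : 2 ≤ n)
    (P : Polynomial ℝ) (hPmonic : P.Monic) (hPdeg : P.natDegree = 2 * n - 2)
    (hPpos : ∀ x : ℝ, 0 < P.eval x)
    (R : Polynomial ℝ)
    (Q : Polynomial ℝ) (hQmonic : Q.Monic) (hQdeg : Q.natDegree = n)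
    (S : Polynomial ℝ) (hSmonic : S.Monic) (hSdeg : S.natDegree = n - 1)
    (hQ : P * derivative (derivative Q) - derivative P * derivative Q + R * Q = 0)
    (hS : P * derivative (derivative S) - derivative P * derivative S + R * S = 0) :
    P = S * derivative Q - derivative S * Q ∧
    R = derivative S * derivative (derivative Q)
        - derivative (derivative S) * derivative Q := by
  have hQpos : 0 < Q.natDegree := by omega
  have hSpos : 0 < S.natDegree := by omega
  have hPpos' : 0 < P.natDegree := by omega
  have hQ'deg : (derivative Q).natDegree = n - 1 := by rw [natDeg_deriv hQpos, hQdeg]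
  have hS'deg : (derivative S).natDegree = n - 2 := by rw [natDeg_deriv hSpos, hSdeg]; omega
  have hP'deg : (derivative P).natDegree = 2 * n - 3 := by
    rw [natDeg_deriv hPpos', hPdeg]; omega
  have hQ'lead : (derivative Q).leadingCoeff = n := by
    rw [lead_deriv hQpos, hQdeg, hQmonic.leadingCoeff, mul_one]
  have hS'lead : (derivative S).leadingCoeff = (n - 1 : ℕ) := by
    rw [lead_deriv hSpos, hSdeg, hSmonic.leadingCoeff, mul_one]
  have hP'lead : (derivative P).leadingCoeff = (2 * n - 2 : ℕ) := by
    rw [lead_deriv hPpos', hPdeg, hPmonic.leadingCoeff, mul_one]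
  set W : Polynomial ℝ := S * derivative Q - derivative S * Q with hW
  have hW' : derivative W = S * derivative (derivative Q) - derivative (derivative S) * Q := by
    simp only [hW, derivative_sub, derivative_mul]; ring
  -- the key Wronskian identity
  have key : P * derivative W - derivative P * W = 0 := by
    rw [hW', hW]; linear_combination S * hQ - Q * hS
  set d : Polynomial ℝ := W - P with hd
  have hdeq : P * derivative d = derivative P * d := by
    rw [hd, derivative_sub]; linear_combination key
  -- coefficient of W at degree 2n-2 is 1
  have hc1 : (S * derivative Q).coeff (2 * n - 2) = n := by
    have h1 : S.natDegree + (derivative Q).natDegree = 2 * n - 2 := by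
      rw [hSdeg, hQ'deg]; omega
    rw [← h1, coeff_mul_degree_add_degree, hSmonic.leadingCoeff, hQ'lead, one_mul]
  have hc2 : (derivative S * Q).coeff (2 * n - 2) = (n - 1 : ℕ) := by
    have h1 : (derivative S).natDegree + Q.natDegree = 2 * n - 2 := by
      rw [hS'deg, hQdeg]; omega
    rw [← h1, coeff_mul_degree_add_degree, hS'lead, hQmonic.leadingCoeff, mul_one]
  have hcP : P.coeff (2 * n - 2) = 1 := by
    rw [← hPdeg]; exact hPmonic.coeff_natDegree
  have hdcoeff : d.coeff (2 * n - 2) = 0 := by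
    simp only [hd, hW, coeff_sub, hc1, hc2, hcP]
    push_cast [Nat.cast_sub (by omega : 1 ≤ n)]
    ring
  -- degree bound for d
  have hdle : d.natDegree ≤ 2 * n - 2 := by
    refine (natDegree_sub_le _ _).trans (max_le ((natDegree_sub_le _ _).trans (max_le ?_ ?_)) ?_)
    · exact (natDegree_mul_le).trans (by rw [hSdeg, hQ'deg]; omega)
    · exact (natDegree_mul_le).trans (by rw [hS'deg, hQdeg]; omega)
    · omega
  have hdlt : d ≠ 0 → d.natDegree < 2 * n - 2 := by
    intro h0
    rcases lt_or_eq_of_le hdle with h | h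
    · exact h
    · exfalso
      apply h0
      rw [← leadingCoeff_eq_zero, leadingCoeff, h]
      exact hdcoeff
  -- show d = 0
  have hd0 : d = 0 := by
    by_contra h0
    by_cases hd' : derivative d = 0
    · rw [hd', mul_zero] at hdeq
      have hP' : derivative P ≠ 0 := by
        intro h
        have := natDegree_eq_zero_of_derivative_eq_zero h
        omega
      rcases mul_eq_zero.mp hdeq.symm with h | h
      · exact hP' h
      · exact h0 h
    · have hdpos : 0 < d.natDegree := by
        rcases Nat.eq_zero_or_pos d.natDegree with h | h
        · exact absurd (derivative_of_natDegree_zero h) hd'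
        · exact h
      have hdeg : P.natDegree + (derivative d).natDegree
          = (derivative P).natDegree + d.natDegree := by
        have := congrArg natDegree hdeq
        rwa [natDegree_mul hPmonic.ne_zero hd',
          natDegree_mul (fun h => by
            have := natDegree_eq_zero_of_derivative_eq_zero h; omega) h0] at this
      have hlead := congrArg leadingCoeff hdeq
      rw [leadingCoeff_mul, leadingCoeff_mul, hPmonic.leadingCoeff, one_mul,
        lead_deriv hdpos, hP'lead] at hlead
      have hne : d.leadingCoeff ≠ 0 := leadingCoeff_ne_zero.mpr h0
      have hcast : (d.natDegree : ℝ) = ((2 * n - 2 : ℕ) : ℝ) :=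
        mul_right_cancel₀ hne hlead
      have : d.natDegree = 2 * n - 2 := by exact_mod_cast hcast
      have := hdlt h0
      omega
  have hPW : P = W := by
    have := sub_eq_zero.mp hd0
    exact this.symm
  refine ⟨hPW, ?_⟩
  have hP' : derivative P = S * derivative (derivative Q) - derivative (derivative S) * Q := by
    rw [hPW, hW']
  have hQne : Q ≠ 0 := hQmonic.ne_zero
  have : Q * R = Q * (derivative S * derivative (derivative Q)
      - derivative (derivative S) * derivative Q) := by
    rw [hW] at hPW
    linear_combination hQ - derivative (derivative Q) * hPW + derivative Q * hP'
  exact mul_left_cancel₀ hQne this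
end
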